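/- arXiv:1807.07440 — 3 statements merged into one kernel-verified Lean document; each statement's English description precedes it below -/
import Mathlib

section
/- Let s₀ ∈ ℝ, δ > 0 and C₀ ≥ 0. Let v : [s₀,∞) × ℝ → ℂ be a smooth bounded map with v(s, t+1) = v(s, t) for all (s,t), and set g := ∂ₛv + i·∂ₜv. Assume: (a) ‖g(s,·)‖_{L²} ≤ C₀·e^{−δ s} for all s ≥ s₀; (b) ∂ₜv(s,t) → 0 as s → ∞ uniformly in t; (c) ∫₀¹ v(s,t) dt = 0 for every s ≥ s₀. Then for every ρ with 0 ≤ ρ < δ and ρ < 1/2, the integral ∫_{s₀}^∞ e^{2ρ s}·‖v(s,·)‖_{L²}² ds is finite, and there exists a constant C > 0 such that ∫_s^{s+1} ‖v(σ,·)‖_{L²}² dσ ≤ C·e^{−2ρ s} for all s ≥ s₀. -/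
open MeasureTheory

/-- Partial derivative in the first (cylinder) variable `s`. -/
noncomputable def pds (v : ℝ → ℝ → ℂ) (s t : ℝ) : ℂ := deriv (fun σ => v σ t) s

/-- Partial derivative in the second (circle) variable `t`. -/
noncomputable def pdt (v : ℝ → ℝ → ℂ) (s t : ℝ) : ℂ := deriv (fun τ => v s τ) t

/-- The `L²` norm of a (1-periodic) function over `t ∈ [0,1]`. -/
noncomputable def l2norm (f : ℝ → ℂ) : ℝ := Real.sqrt (∫ t in (0:ℝ)..1, ‖f t‖ ^ 2)

namespace HWZ

/-- The real inner product on `ℂ ≅ ℝ²`. -/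
def ip (a b : ℂ) : ℝ := a.re * b.re + a.im * b.im

lemma normsq_eq (z : ℂ) : ‖z‖ ^ 2 = z.re ^ 2 + z.im ^ 2 := by
  rw [Complex.sq_norm, Complex.normSq_apply]; ring

lemma ip_self (a : ℂ) : ip a a = ‖a‖ ^ 2 := by rw [normsq_eq]; simp [ip]; ring

lemma ip_comm (a b : ℂ) : ip a b = ip b a := by simp [ip]; ring

lemma ip_add_right (a b c : ℂ) : ip a (b + c) = ip a b + ip a c := by simp [ip]; ring

lemma ip_reverse (a b : ℂ) : ip a (-(Complex.I) * b) = - ip b (-(Complex.I) * a) := by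
  simp [ip]; ring

lemma young (a b : ℂ) {η : ℝ} (hη : 0 < η) :
    |2 * ip a b| ≤ η * ‖a‖ ^ 2 + (1/η) * ‖b‖ ^ 2 := by
  have hb : (1/η) * ‖b‖ ^ 2 * η = ‖b‖ ^ 2 := by field_simp
  rw [abs_le]
  constructor <;>
  · rw [normsq_eq, normsq_eq] at *; unfold ip
    nlinarith [sq_nonneg (η*a.re - b.re), sq_nonneg (η*a.re + b.re),
      sq_nonneg (η*a.im - b.im), sq_nonneg (η*a.im + b.im), sq_nonneg η, mul_pos hη hη]

lemma key_ineq (a b : ℂ) : ‖b‖ ^ 2 - 4 * ‖a + Complex.I * b‖ ^ 2 ≤ 4 * ip a (-(Complex.I) * b) := by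
  rw [normsq_eq, normsq_eq]; unfold ip
  simp only [Complex.add_re, Complex.add_im, Complex.mul_re, Complex.mul_im, Complex.I_re,
    Complex.I_im, Complex.neg_re, Complex.neg_im]
  nlinarith [sq_nonneg (2*a.re - b.im), sq_nonneg (2*a.im + b.re), sq_nonneg b.re, sq_nonneg b.im]

lemma hasDerivAt_ip {f g : ℝ → ℂ} {f' g' : ℂ} {x : ℝ}
    (hf : HasDerivAt f f' x) (hg : HasDerivAt g g' x) :
    HasDerivAt (fun y => ip (f y) (g y)) (ip f' (g x) + ip (f x) g') x := by
  have hfre : HasDerivAt (fun y => (f y).re) f'.re x :=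
    Complex.reCLM.hasFDerivAt.comp_hasDerivAt x hf
  have hfim : HasDerivAt (fun y => (f y).im) f'.im x :=
    Complex.imCLM.hasFDerivAt.comp_hasDerivAt x hf
  have hgre : HasDerivAt (fun y => (g y).re) g'.re x :=
    Complex.reCLM.hasFDerivAt.comp_hasDerivAt x hg
  have hgim : HasDerivAt (fun y => (g y).im) g'.im x :=
    Complex.imCLM.hasFDerivAt.comp_hasDerivAt x hg
  have := (hfre.mul hgre).add (hfim.mul hgim)
  have heq : ip f' (g x) + ip (f x) g' = f'.re * (g x).re + (f x).re * g'.re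
      + (f'.im * (g x).im + (f x).im * g'.im) := by unfold ip; ring
  rw [heq]; exact this

lemma continuous_ip {α : Type*} [TopologicalSpace α] {A B : α → ℂ}
    (hA : Continuous A) (hB : Continuous B) : Continuous fun x => ip (A x) (B x) :=
  ((Complex.continuous_re.comp hA).mul (Complex.continuous_re.comp hB)).add
    ((Complex.continuous_im.comp hA).mul (Complex.continuous_im.comp hB))

section
variable {E : Type*} [NormedAddCommGroup E] [NormedSpace ℝ E]

lemma slice1 {u : ℝ × ℝ → E} (hu : Differentiable ℝ u) (s t : ℝ) :
    HasDerivAt (fun σ => u (σ, t)) (fderiv ℝ u (s, t) (1, 0)) s := by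
  have h1 : HasDerivAt (fun σ : ℝ => (σ, t)) ((1 : ℝ), (0 : ℝ)) s :=
    (hasDerivAt_id s).prodMk (hasDerivAt_const s t)
  exact ((hu (s, t)).hasFDerivAt).comp_hasDerivAt s h1

lemma slice2 {u : ℝ × ℝ → E} (hu : Differentiable ℝ u) (s t : ℝ) :
    HasDerivAt (fun τ => u (s, τ)) (fderiv ℝ u (s, t) (0, 1)) t := by
  have h1 : HasDerivAt (fun τ : ℝ => (s, τ)) ((0 : ℝ), (1 : ℝ)) t :=
    (hasDerivAt_const t s).prodMk (hasDerivAt_id t)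
  exact ((hu (s, t)).hasFDerivAt).comp_hasDerivAt t h1

lemma contDiff_fderiv_apply {u : ℝ × ℝ → E} (hu : ContDiff ℝ (⊤ : ℕ∞) u) (w : ℝ × ℝ) :
    ContDiff ℝ (⊤ : ℕ∞) (fun p => fderiv ℝ u p w) :=
  ((ContinuousLinearMap.apply ℝ E w).contDiff).comp (hu.fderiv_right (by simp))

lemma mixed_symm {u : ℝ × ℝ → E} (hu : ContDiff ℝ (⊤ : ℕ∞) u) (p : ℝ × ℝ) :
    fderiv ℝ (fun q => fderiv ℝ u q (0, 1)) p (1, 0)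
      = fderiv ℝ (fun q => fderiv ℝ u q (1, 0)) p (0, 1) := by
  have hdiff : Differentiable ℝ (fderiv ℝ u) :=
    (hu.fderiv_right (m := (⊤ : ℕ∞)) ((by simp))).differentiable (by simp)
  have hx : HasFDerivAt (fderiv ℝ u) (fderiv ℝ (fderiv ℝ u) p) p :=
    (hdiff p).hasFDerivAt
  have h1 : ∀ w : ℝ × ℝ, fderiv ℝ (fun q => fderiv ℝ u q w) p
      = ((ContinuousLinearMap.apply ℝ E w).comp (fderiv ℝ (fderiv ℝ u) p)) := by
    intro w
    exact (((ContinuousLinearMap.apply ℝ E w).hasFDerivAt).comp p hx).fderiv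
  rw [h1, h1]
  have hsymm := second_derivative_symmetric
    (fun y => ((hu.differentiable (by simp)) y).hasFDerivAt) hx
    ((1 : ℝ), (0 : ℝ)) ((0 : ℝ), (1 : ℝ))
  simpa using hsymm

end

lemma hasDerivAt_param (F F' : ℝ → ℝ → ℝ) (hF : Continuous (Function.uncurry F))
    (hF' : Continuous (Function.uncurry F'))
    (hd : ∀ x t : ℝ, HasDerivAt (fun y => F y t) (F' x t) x) (x₀ : ℝ) :
    HasDerivAt (fun y => ∫ t in (0:ℝ)..1, F y t) (∫ t in (0:ℝ)..1, F' x₀ t) x₀ := by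
  obtain ⟨Cb, hCb⟩ : ∃ C, ∀ p ∈ (Set.Icc (x₀ - 1) (x₀ + 1) ×ˢ Set.Icc (0:ℝ) 1),
      ‖Function.uncurry F' p‖ ≤ C :=
    (isCompact_Icc.prod isCompact_Icc).exists_bound_of_continuousOn hF'.continuousOn
  refine (intervalIntegral.hasDerivAt_integral_of_dominated_loc_of_deriv_le
      (F := F) (F' := F') (bound := fun _ => Cb) (Metric.ball_mem_nhds x₀ one_pos)
      (Filter.Eventually.of_forall fun x =>
        ((hF.comp (Continuous.prodMk_right x)).aestronglyMeasurable))
      ((hF.comp (Continuous.prodMk_right x₀)).intervalIntegrable 0 1)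
      ((hF'.comp (Continuous.prodMk_right x₀)).aestronglyMeasurable)
      (Filter.Eventually.of_forall fun t ht x hx => ?_)
      (intervalIntegrable_const)
      (Filter.Eventually.of_forall fun t _ x _ => hd x t)).2
  have ht' : t ∈ Set.Icc (0:ℝ) 1 := by
    have := Set.uIoc_of_le (by norm_num : (0:ℝ) ≤ 1) ▸ ht
    exact ⟨le_of_lt this.1, this.2⟩
  have hx' : x ∈ Set.Icc (x₀ - 1) (x₀ + 1) := by
    rw [Metric.mem_ball, Real.dist_eq, abs_lt] at hx
    constructor <;> linarith [hx.1, hx.2]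
  exact hCb (x, t) ⟨hx', ht'⟩

lemma poincare {u u' : ℝ → ℂ} (hu : ∀ t, HasDerivAt u (u' t) t) (hu' : Continuous u')
    (hmean : (∫ t in (0:ℝ)..1, u t) = 0) :
    (∫ t in (0:ℝ)..1, ‖u t‖ ^ 2) ≤ ∫ t in (0:ℝ)..1, ‖u' t‖ ^ 2 := by
  have hucont : Continuous u := by
    rw [continuous_iff_continuousAt]; exact fun t => (hu t).continuousAt
  set N : ℝ := ∫ t in (0:ℝ)..1, ‖u' t‖ with hN
  have hN0 : 0 ≤ N := intervalIntegral.integral_nonneg (by norm_num) (fun _ _ => norm_nonneg _)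
  have hint : ∀ a b : ℝ, IntervalIntegrable (fun t => ‖u' t‖) volume a b :=
    fun a b => (hu'.norm).intervalIntegrable a b
  have sub1 : ∀ τ t : ℝ, 0 ≤ τ → τ ≤ t → t ≤ 1 → ‖u t - u τ‖ ≤ N := by
    intro τ t h0 hτt h1
    have hftc : (∫ x in τ..t, u' x) = u t - u τ :=
      intervalIntegral.integral_eq_sub_of_hasDerivAt (fun x _ => hu x)
        (hu'.intervalIntegrable τ t)
    rw [← hftc]
    refine le_trans (intervalIntegral.norm_integral_le_integral_norm hτt) ?_
    have hsplit : (∫ x in (0:ℝ)..τ, ‖u' x‖) + (∫ x in τ..t, ‖u' x‖)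
        + (∫ x in t..(1:ℝ), ‖u' x‖) = N := by
      rw [intervalIntegral.integral_add_adjacent_intervals (hint 0 τ) (hint τ t),
        intervalIntegral.integral_add_adjacent_intervals (hint 0 t) (hint t 1)]
    have p1 : 0 ≤ ∫ x in (0:ℝ)..τ, ‖u' x‖ :=
      intervalIntegral.integral_nonneg h0 (fun _ _ => norm_nonneg _)
    have p3 : 0 ≤ ∫ x in t..(1:ℝ), ‖u' x‖ :=
      intervalIntegral.integral_nonneg h1 (fun _ _ => norm_nonneg _)
    linarith
  have sub1' : ∀ τ t : ℝ, τ ∈ Set.Icc (0:ℝ) 1 → t ∈ Set.Icc (0:ℝ) 1 → ‖u t - u τ‖ ≤ N := by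
    intro τ t hτ ht
    rcases le_total τ t with h | h
    · exact sub1 τ t hτ.1 h ht.2
    · rw [norm_sub_rev]; exact sub1 t τ ht.1 h hτ.2
  have pointbound : ∀ t ∈ Set.Icc (0:ℝ) 1, ‖u t‖ ≤ N := by
    intro t ht
    have hrepr : u t = ∫ τ in (0:ℝ)..1, (u t - u τ) := by
      rw [intervalIntegral.integral_sub (intervalIntegrable_const)
        (hucont.intervalIntegrable 0 1), hmean, intervalIntegral.integral_const]
      simp
    rw [hrepr]
    have := intervalIntegral.norm_integral_le_of_norm_le_const
      (C := N) (f := fun τ => u t - u τ) (a := (0:ℝ)) (b := 1) ?_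
    · simpa using this
    · intro τ hτ
      have hτ' : τ ∈ Set.Icc (0:ℝ) 1 := by
        have := Set.uIoc_of_le (by norm_num : (0:ℝ) ≤ 1) ▸ hτ
        exact ⟨le_of_lt this.1, this.2⟩
      exact sub1' τ t hτ' ht
  have step2 : (∫ t in (0:ℝ)..1, ‖u t‖ ^ 2) ≤ N ^ 2 := by
    have : (∫ t in (0:ℝ)..1, ‖u t‖ ^ 2) ≤ ∫ _t in (0:ℝ)..1, N ^ 2 := by
      refine intervalIntegral.integral_mono_on (by norm_num)
        (((hucont.norm).pow 2).intervalIntegrable 0 1) (intervalIntegrable_const) ?_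
      intro t ht
      exact pow_le_pow_left₀ (norm_nonneg _) (pointbound t ht) 2
    simpa using this
  have step3 : N ^ 2 ≤ ∫ t in (0:ℝ)..1, ‖u' t‖ ^ 2 := by
    have hnn : 0 ≤ ∫ t in (0:ℝ)..1, (‖u' t‖ - N) ^ 2 :=
      intervalIntegral.integral_nonneg (by norm_num) (fun _ _ => sq_nonneg _)
    have hexp : (∫ t in (0:ℝ)..1, (‖u' t‖ - N) ^ 2)
        = (∫ t in (0:ℝ)..1, ‖u' t‖ ^ 2) - N ^ 2 := by
      have heq : (fun t => (‖u' t‖ - N) ^ 2)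
          = fun t => ‖u' t‖ ^ 2 - (2 * N * ‖u' t‖ - N ^ 2) := by funext t; ring
      rw [heq, intervalIntegral.integral_sub (f := fun t => ‖u' t‖ ^ 2)
          (g := fun t => 2 * N * ‖u' t‖ - N ^ 2) (((hu'.norm).pow 2).intervalIntegrable 0 1)
        (((continuous_const.mul hu'.norm).sub continuous_const).intervalIntegrable 0 1),
        intervalIntegral.integral_sub (f := fun t => 2 * N * ‖u' t‖) (g := fun _ => N ^ 2)
          ((continuous_const.mul hu'.norm).intervalIntegrable 0 1)
          intervalIntegrable_const,
        intervalIntegral.integral_const_mul, intervalIntegral.integral_const]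
      simp only [smul_eq_mul, sub_zero, one_mul]
      rw [← hN]; ring
    linarith
  linarith

lemma exp_decay_trans {a b s₀ s A : ℝ} (hA : 0 ≤ A) (hab : a ≤ b) (hs : s₀ ≤ s) :
    A * Real.exp (-b * s) ≤ (A * Real.exp ((a - b) * s₀)) * Real.exp (-a * s) := by
  rw [mul_assoc, ← Real.exp_add]
  refine mul_le_mul_of_nonneg_left ?_ hA
  rw [Real.exp_le_exp]
  nlinarith

end HWZ

open HWZ in
set_option maxHeartbeats 1000000 in
/-- Lemma 1.5.1 (Hofer–Wysocki–Zehnder exponential decay on the half-cylinder):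
if `v` is smooth, bounded, 1-periodic in `t`, solves `v_s + i v_t = g` with
`‖g(s,·)‖_{L²} ≤ C₀ e^{-δ s}`, has `v_t → 0` uniformly in `t` as `s → ∞`, and has
vanishing mean values, then for every `0 ≤ ρ < δ`, `ρ < 1/2` the weighted integral
`∫_{s₀}^∞ e^{2ρ s} ‖v(s)‖² ds` is finite and `∫_s^{s+1} ‖v(σ)‖² dσ ≤ C e^{-2ρ s}`. -/
theorem hwz_halfcylinder_decay
    (s₀ δ C₀ : ℝ) (hδ : 0 < δ) (hC₀ : 0 ≤ C₀)
    (v : ℝ → ℝ → ℂ)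
    (hsmooth : ContDiff ℝ (⊤ : ℕ∞) (Function.uncurry v))
    (hbounded : ∃ M : ℝ, ∀ s t : ℝ, s₀ ≤ s → ‖v s t‖ ≤ M)
    (hper : ∀ s t : ℝ, v s (t + 1) = v s t)
    (hg : ∀ s : ℝ, s₀ ≤ s →
      l2norm (fun t => pds v s t + Complex.I * pdt v s t) ≤ C₀ * Real.exp (-δ * s))
    (hvt : ∀ ε : ℝ, 0 < ε → ∃ S : ℝ, ∀ s t : ℝ, S ≤ s → ‖pdt v s t‖ ≤ ε)
    (hmean : ∀ s : ℝ, s₀ ≤ s → (∫ t in (0:ℝ)..1, v s t) = 0) :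
    ∀ ρ : ℝ, 0 ≤ ρ → ρ < δ → ρ < 1/2 →
      IntegrableOn (fun s => Real.exp (2 * ρ * s) * (l2norm (v s)) ^ 2) (Set.Ici s₀) ∧
      ∃ C : ℝ, 0 < C ∧ ∀ s : ℝ, s₀ ≤ s →
        (∫ σ in s..(s + 1), (l2norm (v σ)) ^ 2) ≤ C * Real.exp (-2 * ρ * s) := by
  obtain ⟨M, hM⟩ := hbounded
  intro ρ hρ0 hρδ hρhalf
  have hVd : Differentiable ℝ (Function.uncurry v) := hsmooth.differentiable (by simp)
  have hvcont : Continuous (Function.uncurry v) := hsmooth.continuous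
  -- first partial derivatives
  have hvd1 : ∀ s t : ℝ, HasDerivAt (fun σ => v σ t)
      (fderiv ℝ (Function.uncurry v) (s, t) (1, 0)) s := fun s t => slice1 hVd s t
  have hvd2 : ∀ s t : ℝ, HasDerivAt (fun τ => v s τ)
      (fderiv ℝ (Function.uncurry v) (s, t) (0, 1)) t := fun s t => slice2 hVd s t
  have hpds_eq : ∀ s t : ℝ, pds v s t = fderiv ℝ (Function.uncurry v) (s, t) (1, 0) :=
    fun s t => (hvd1 s t).deriv
  have hpdt_eq : ∀ s t : ℝ, pdt v s t = fderiv ℝ (Function.uncurry v) (s, t) (0, 1) :=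
    fun s t => (hvd2 s t).deriv
  have hpds_has : ∀ s t : ℝ, HasDerivAt (fun σ => v σ t) (pds v s t) s := by
    intro s t; rw [hpds_eq]; exact hvd1 s t
  have hpdt_has : ∀ s t : ℝ, HasDerivAt (fun τ => v s τ) (pdt v s t) t := by
    intro s t; rw [hpdt_eq]; exact hvd2 s t
  set W1 : ℝ × ℝ → ℂ := fun p => fderiv ℝ (Function.uncurry v) p (1, 0) with hW1def
  set W2 : ℝ × ℝ → ℂ := fun p => fderiv ℝ (Function.uncurry v) p (0, 1) with hW2def
  have hW1smooth : ContDiff ℝ (⊤ : ℕ∞) W1 := contDiff_fderiv_apply hsmooth _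
  have hW2smooth : ContDiff ℝ (⊤ : ℕ∞) W2 := contDiff_fderiv_apply hsmooth _
  have hpds_unc : Function.uncurry (pds v) = W1 := funext fun p => hpds_eq p.1 p.2
  have hpdt_unc : Function.uncurry (pdt v) = W2 := funext fun p => hpdt_eq p.1 p.2
  have cpds : Continuous (Function.uncurry (pds v)) := by
    rw [hpds_unc]; exact hW1smooth.continuous
  have cpdt : Continuous (Function.uncurry (pdt v)) := by
    rw [hpdt_unc]; exact hW2smooth.continuous
  -- mixed second derivative
  set D : ℝ → ℝ → ℂ := fun s t => fderiv ℝ W2 (s, t) (1, 0) with hDdef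
  have cD : Continuous (Function.uncurry D) := by
    have : Function.uncurry D = fun p : ℝ × ℝ => fderiv ℝ W2 p (1, 0) := by
      funext p; simp [Function.uncurry, hDdef]
    rw [this]; exact (contDiff_fderiv_apply hW2smooth _).continuous
  have hpdt_s : ∀ s t : ℝ, HasDerivAt (fun σ => pdt v σ t) (D s t) s := by
    intro s t
    have h1 : (fun σ => pdt v σ t) = fun σ => W2 (σ, t) := funext fun σ => hpdt_eq σ t
    rw [h1]
    exact slice1 (hW2smooth.differentiable (by simp)) s t
  have hDsym : ∀ s t : ℝ, fderiv ℝ W1 (s, t) (0, 1) = D s t := by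
    intro s t
    exact (mixed_symm hsmooth (s, t)).symm
  have hpds_t : ∀ s t : ℝ, HasDerivAt (fun τ => pds v s τ) (D s t) t := by
    intro s t
    have h1 : (fun τ => pds v s τ) = fun τ => W1 (s, τ) := funext fun τ => hpds_eq s τ
    rw [h1, ← hDsym]
    exact slice2 (hW1smooth.differentiable (by simp)) s t
  -- the basic integral quantities
  set f : ℝ → ℝ := fun s => ∫ t in (0:ℝ)..1, ‖v s t‖ ^ 2 with hfdef
  set f1 : ℝ → ℝ := fun s => ∫ t in (0:ℝ)..1, 2 * ip (v s t) (-(Complex.I) * pdt v s t)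
    with hf1def
  set e : ℝ → ℝ := fun s => ∫ t in (0:ℝ)..1, ‖pds v s t + Complex.I * pdt v s t‖ ^ 2 with hedef
  set r : ℝ → ℝ := fun s => ∫ t in (0:ℝ)..1,
    2 * ip (v s t) (pds v s t + Complex.I * pdt v s t) with hrdef
  set df1 : ℝ → ℝ := fun s => ∫ t in (0:ℝ)..1, 4 * ip (pds v s t) (-(Complex.I) * pdt v s t)
    with hdf1def
  -- continuity in t of all the slice integrands, at fixed s
  have cv_s : ∀ s : ℝ, Continuous (fun t => v s t) :=
    fun s => hvcont.comp (Continuous.prodMk_right s)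
  have cpds_s : ∀ s : ℝ, Continuous (fun t => pds v s t) :=
    fun s => cpds.comp (Continuous.prodMk_right s)
  have cpdt_s : ∀ s : ℝ, Continuous (fun t => pdt v s t) :=
    fun s => cpdt.comp (Continuous.prodMk_right s)
  have cD_s : ∀ s : ℝ, Continuous (fun t => D s t) :=
    fun s => cD.comp (Continuous.prodMk_right s)
  have hf_nonneg : ∀ s, 0 ≤ f s :=
    fun s => intervalIntegral.integral_nonneg (by norm_num) (fun _ _ => sq_nonneg _)
  have he_nonneg : ∀ s, 0 ≤ e s :=
    fun s => intervalIntegral.integral_nonneg (by norm_num) (fun _ _ => sq_nonneg _)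
  have hl2 : ∀ s, (l2norm (v s)) ^ 2 = f s := fun s => Real.sq_sqrt (hf_nonneg s)
  -- derivative of f
  have hfd : ∀ x : ℝ, HasDerivAt f (f1 x + r x) x := by
    intro x
    have hF' : ∀ y t : ℝ, HasDerivAt (fun z => ‖v z t‖ ^ 2) (2 * ip (v y t) (pds v y t)) y := by
      intro y t
      have h1 : (fun z => ‖v z t‖ ^ 2) = fun z => ip (v z t) (v z t) :=
        funext fun z => (ip_self (v z t)).symm
      rw [h1]
      have := hasDerivAt_ip (hpds_has y t) (hpds_has y t)
      convert this using 1
      rw [ip_comm (pds v y t) (v y t)]; ring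
    have hcF : Continuous (Function.uncurry (fun (x t : ℝ) => ‖v x t‖ ^ 2)) :=
      (hvcont.norm).pow 2
    have hcF' : Continuous (Function.uncurry (fun (x t : ℝ) => 2 * ip (v x t) (pds v x t))) :=
      continuous_const.mul (continuous_ip hvcont cpds)
    have hmain := hasDerivAt_param _ _ hcF hcF' (fun y t => hF' y t) x
    have hsplit : (∫ t in (0:ℝ)..1, 2 * ip (v x t) (pds v x t)) = f1 x + r x := by
      have hptw : ∀ t : ℝ, 2 * ip (v x t) (pds v x t)
          = 2 * ip (v x t) (-(Complex.I) * pdt v x t)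
            + 2 * ip (v x t) (pds v x t + Complex.I * pdt v x t) := by
        intro t
        have : pds v x t = (-(Complex.I) * pdt v x t)
            + (pds v x t + Complex.I * pdt v x t) := by ring
        rw [this, ip_add_right]
        rw [← this]
        ring
      rw [intervalIntegral.integral_congr (fun t _ => hptw t),
        intervalIntegral.integral_add (f := fun t => 2 * ip (v x t) (-(Complex.I) * pdt v x t))
          (g := fun t => 2 * ip (v x t) (pds v x t + Complex.I * pdt v x t))
          ((continuous_const.mul (continuous_ip (cv_s x)
            (continuous_const.mul (cpdt_s x)))).intervalIntegrable 0 1)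
          ((continuous_const.mul (continuous_ip (cv_s x)
            ((cpds_s x).add (continuous_const.mul (cpdt_s x))))).intervalIntegrable 0 1)]
    rw [← hsplit]
    exact hmain
  -- integration by parts identity
  have byparts : ∀ s : ℝ, (∫ t in (0:ℝ)..1, ip (v s t) (-(Complex.I) * D s t))
      = ∫ t in (0:ℝ)..1, ip (pds v s t) (-(Complex.I) * pdt v s t) := by
    intro s
    set w : ℝ → ℝ := fun t => ip (v s t) (-(Complex.I) * pds v s t) with hwdef
    have hw : ∀ t : ℝ, HasDerivAt w
        (ip (pdt v s t) (-(Complex.I) * pds v s t) + ip (v s t) (-(Complex.I) * D s t)) t := by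
      intro t
      exact hasDerivAt_ip (hpdt_has s t) ((hpds_t s t).const_mul (-(Complex.I)))
    have hwcont : Continuous (fun t => ip (pdt v s t) (-(Complex.I) * pds v s t)
        + ip (v s t) (-(Complex.I) * D s t)) :=
      (continuous_ip (cpdt_s s) (continuous_const.mul (cpds_s s))).add
        (continuous_ip (cv_s s) (continuous_const.mul (cD_s s)))
    have hftc : (∫ t in (0:ℝ)..1, (ip (pdt v s t) (-(Complex.I) * pds v s t)
        + ip (v s t) (-(Complex.I) * D s t))) = w 1 - w 0 :=
      intervalIntegral.integral_eq_sub_of_hasDerivAt (fun t _ => hw t)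
        (hwcont.intervalIntegrable 0 1)
    have hper1 : v s 1 = v s 0 := by have := hper s 0; rwa [zero_add] at this
    have hper2 : pds v s 1 = pds v s 0 := by
      show deriv (fun σ => v σ 1) s = deriv (fun σ => v σ 0) s
      congr 1
      funext σ
      have := hper σ 0; rwa [zero_add] at this
    have hw10 : w 1 = w 0 := by rw [hwdef]; simp only [hper1, hper2]
    rw [hw10, sub_self] at hftc
    have hsplit : (∫ t in (0:ℝ)..1, (ip (pdt v s t) (-(Complex.I) * pds v s t)
        + ip (v s t) (-(Complex.I) * D s t)))
        = (∫ t in (0:ℝ)..1, ip (pdt v s t) (-(Complex.I) * pds v s t))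
          + ∫ t in (0:ℝ)..1, ip (v s t) (-(Complex.I) * D s t) := intervalIntegral.integral_add
      ((continuous_ip (cpdt_s s) (continuous_const.mul (cpds_s s))).intervalIntegrable 0 1)
      ((continuous_ip (cv_s s) (continuous_const.mul (cD_s s))).intervalIntegrable 0 1)
    rw [hsplit] at hftc
    have hrev : (∫ t in (0:ℝ)..1, ip (pdt v s t) (-(Complex.I) * pds v s t))
        = - ∫ t in (0:ℝ)..1, ip (pds v s t) (-(Complex.I) * pdt v s t) := by
      have h2 : (∫ t in (0:ℝ)..1, ip (pdt v s t) (-(Complex.I) * pds v s t))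
          = ∫ t in (0:ℝ)..1, -(ip (pds v s t) (-(Complex.I) * pdt v s t)) :=
        intervalIntegral.integral_congr (fun t _ => ip_reverse (pdt v s t) (pds v s t))
      rw [h2, intervalIntegral.integral_neg]
    rw [hrev] at hftc
    linarith
  -- derivative of f1
  have hf1d : ∀ x : ℝ, HasDerivAt f1 (df1 x) x := by
    intro x
    have hF' : ∀ y t : ℝ, HasDerivAt (fun z => 2 * ip (v z t) (-(Complex.I) * pdt v z t))
        (2 * (ip (pds v y t) (-(Complex.I) * pdt v y t)
          + ip (v y t) (-(Complex.I) * D y t))) y := by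
      intro y t
      exact (hasDerivAt_ip (hpds_has y t) ((hpdt_s y t).const_mul (-(Complex.I)))).const_mul 2
    have hcF : Continuous (Function.uncurry
        (fun (x t : ℝ) => 2 * ip (v x t) (-(Complex.I) * pdt v x t))) :=
      continuous_const.mul (continuous_ip hvcont (continuous_const.mul cpdt))
    have hcF' : Continuous (Function.uncurry (fun (y t : ℝ) =>
        2 * (ip (pds v y t) (-(Complex.I) * pdt v y t) + ip (v y t) (-(Complex.I) * D y t)))) :=
      continuous_const.mul ((continuous_ip cpds (continuous_const.mul cpdt)).add
        (continuous_ip hvcont (continuous_const.mul cD)))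
    have hmain := hasDerivAt_param _ _ hcF hcF' (fun y t => hF' y t) x
    have heq : (∫ t in (0:ℝ)..1, 2 * (ip (pds v x t) (-(Complex.I) * pdt v x t)
        + ip (v x t) (-(Complex.I) * D x t))) = df1 x := by
      have h1 := intervalIntegral.integral_congr (μ := volume) (a := (0:ℝ)) (b := 1)
        (g := fun t => 2 * ip (pds v x t) (-(Complex.I) * pdt v x t)
          + 2 * ip (v x t) (-(Complex.I) * D x t))
        (f := fun t => 2 * (ip (pds v x t) (-(Complex.I) * pdt v x t)
          + ip (v x t) (-(Complex.I) * D x t))) (fun t _ => by ring)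
      rw [h1, intervalIntegral.integral_add
        (f := fun t => 2 * ip (pds v x t) (-(Complex.I) * pdt v x t))
        (g := fun t => 2 * ip (v x t) (-(Complex.I) * D x t))
        ((continuous_const.mul (continuous_ip (cpds_s x)
          (continuous_const.mul (cpdt_s x)))).intervalIntegrable 0 1)
        ((continuous_const.mul (continuous_ip (cv_s x)
          (continuous_const.mul (cD_s x)))).intervalIntegrable 0 1),
        intervalIntegral.integral_const_mul, intervalIntegral.integral_const_mul, byparts x]
      rw [hdf1def]
      show _ = ∫ t in (0:ℝ)..1, 4 * ip (pds v x t) (-(Complex.I) * pdt v x t)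
      rw [intervalIntegral.integral_const_mul]
      ring
    rw [← heq]
    exact hmain
  -- the error term bound
  have he_bound0 : ∀ s : ℝ, s₀ ≤ s → e s ≤ C₀ ^ 2 * Real.exp (-(2 * δ) * s) := by
    intro s hs
    have h0 : l2norm (fun t => pds v s t + Complex.I * pdt v s t) = Real.sqrt (e s) := rfl
    have h1 : Real.sqrt (e s) ≤ C₀ * Real.exp (-δ * s) := h0 ▸ hg s hs
    have h2 : e s = Real.sqrt (e s) ^ 2 := (Real.sq_sqrt (he_nonneg s)).symm
    have h3 : Real.sqrt (e s) ^ 2 ≤ (C₀ * Real.exp (-δ * s)) ^ 2 :=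
      pow_le_pow_left₀ (Real.sqrt_nonneg _) h1 2
    have h4 : (C₀ * Real.exp (-δ * s)) ^ 2 = C₀ ^ 2 * Real.exp (-(2 * δ) * s) := by
      have h5 : (-δ * s) + (-δ * s) = -(2 * δ) * s := by ring
      rw [mul_pow]
      congr 1
      rw [pow_two, ← Real.exp_add, h5]
    linarith [h2, h3, h4.le, h4.ge]
  -- Poincaré inequality
  have hpoin : ∀ s : ℝ, s₀ ≤ s → f s ≤ ∫ t in (0:ℝ)..1, ‖pdt v s t‖ ^ 2 := by
    intro s hs
    exact poincare (u := fun t => v s t) (u' := fun t => pdt v s t)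
      (fun t => hpdt_has s t) (cpdt_s s) (hmean s hs)
  -- lower bound for the derivative of f1
  have hdf1_lb : ∀ s : ℝ, s₀ ≤ s → f s - 4 * e s ≤ df1 s := by
    intro s hs
    have cG : Continuous (fun t => pds v s t + Complex.I * pdt v s t) :=
      (cpds_s s).add (continuous_const.mul (cpdt_s s))
    have h1 : (∫ t in (0:ℝ)..1, (‖pdt v s t‖ ^ 2
        - 4 * ‖pds v s t + Complex.I * pdt v s t‖ ^ 2)) ≤ df1 s := by
      refine intervalIntegral.integral_mono_on (by norm_num)
        ((((cpdt_s s).norm.pow 2).sub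
          (continuous_const.mul (cG.norm.pow 2))).intervalIntegrable 0 1)
        ((continuous_const.mul (continuous_ip (cpds_s s)
          (continuous_const.mul (cpdt_s s)))).intervalIntegrable 0 1) ?_
      intro t _
      exact key_ineq (pds v s t) (pdt v s t)
    have h2 : (∫ t in (0:ℝ)..1, (‖pdt v s t‖ ^ 2
        - 4 * ‖pds v s t + Complex.I * pdt v s t‖ ^ 2))
        = (∫ t in (0:ℝ)..1, ‖pdt v s t‖ ^ 2) - 4 * e s := by
      rw [intervalIntegral.integral_sub (f := fun t => ‖pdt v s t‖ ^ 2)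
        (g := fun t => 4 * ‖pds v s t + Complex.I * pdt v s t‖ ^ 2)
        (((cpdt_s s).norm.pow 2).intervalIntegrable 0 1)
        ((continuous_const.mul (cG.norm.pow 2)).intervalIntegrable 0 1),
        intervalIntegral.integral_const_mul]
    linarith [hpoin s hs, h1, h2.le, h2.ge]
  -- bound for r
  have hr_bound : ∀ η : ℝ, 0 < η → ∀ s : ℝ, |r s| ≤ η * f s + (1/η) * e s := by
    intro η hη s
    have cG : Continuous (fun t => pds v s t + Complex.I * pdt v s t) :=
      (cpds_s s).add (continuous_const.mul (cpdt_s s))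
    have cip : Continuous (fun t => 2 * ip (v s t) (pds v s t + Complex.I * pdt v s t)) :=
      continuous_const.mul (continuous_ip (cv_s s) cG)
    have h1 : |r s| ≤ ∫ t in (0:ℝ)..1,
        |2 * ip (v s t) (pds v s t + Complex.I * pdt v s t)| :=
      intervalIntegral.abs_integral_le_integral_abs (by norm_num)
    have h2 : (∫ t in (0:ℝ)..1, |2 * ip (v s t) (pds v s t + Complex.I * pdt v s t)|)
        ≤ ∫ t in (0:ℝ)..1, (η * ‖v s t‖ ^ 2
          + (1/η) * ‖pds v s t + Complex.I * pdt v s t‖ ^ 2) := by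
      refine intervalIntegral.integral_mono_on (by norm_num)
        (cip.abs.intervalIntegrable 0 1)
        (((continuous_const.mul ((cv_s s).norm.pow 2)).add
          (continuous_const.mul (cG.norm.pow 2))).intervalIntegrable 0 1) ?_
      intro t _
      exact young (v s t) (pds v s t + Complex.I * pdt v s t) hη
    have h3 : (∫ t in (0:ℝ)..1, (η * ‖v s t‖ ^ 2
        + (1/η) * ‖pds v s t + Complex.I * pdt v s t‖ ^ 2)) = η * f s + (1/η) * e s := by
      rw [intervalIntegral.integral_add (f := fun t => η * ‖v s t‖ ^ 2)
        (g := fun t => (1/η) * ‖pds v s t + Complex.I * pdt v s t‖ ^ 2)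
        ((continuous_const.mul ((cv_s s).norm.pow 2)).intervalIntegrable 0 1)
        ((continuous_const.mul (cG.norm.pow 2)).intervalIntegrable 0 1),
        intervalIntegral.integral_const_mul, intervalIntegral.integral_const_mul]
    linarith [h1, h2, h3.le, h3.ge]
  -- crude bounds
  have hM0 : 0 ≤ M := le_trans (norm_nonneg _) (hM s₀ 0 le_rfl)
  have hfub : ∀ s : ℝ, s₀ ≤ s → f s ≤ M ^ 2 := by
    intro s hs
    have h1 : (∫ t in (0:ℝ)..1, ‖v s t‖ ^ 2) ≤ ∫ _t in (0:ℝ)..1, M ^ 2 := by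
      refine intervalIntegral.integral_mono_on (by norm_num)
        (((cv_s s).norm.pow 2).intervalIntegrable 0 1) intervalIntegrable_const ?_
      intro t _
      exact pow_le_pow_left₀ (norm_nonneg _) (hM s t hs) 2
    simpa using h1
  obtain ⟨S, hS⟩ := hvt 1 one_pos
  obtain ⟨M₁, hM₁⟩ : ∃ C, ∀ p ∈ (Set.Icc s₀ (max s₀ S) ×ˢ Set.Icc (0:ℝ) 1),
      ‖Function.uncurry (pdt v) p‖ ≤ C :=
    (isCompact_Icc.prod isCompact_Icc).exists_bound_of_continuousOn cpdt.continuousOn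
  set Mt : ℝ := max M₁ 1 with hMtdef
  have hMt1 : (1:ℝ) ≤ Mt := le_max_right _ _
  have hMt0 : 0 ≤ Mt := by linarith
  have hMt : ∀ s t : ℝ, s₀ ≤ s → t ∈ Set.Icc (0:ℝ) 1 → ‖pdt v s t‖ ≤ Mt := by
    intro s t hs ht
    rcases le_total s (max s₀ S) with h | h
    · exact le_trans (hM₁ (s, t) ⟨⟨hs, h⟩, ht⟩) (le_max_left _ _)
    · exact le_trans (hS s t (le_trans (le_max_right s₀ S) h)) hMt1
  have hnI : ∀ z : ℂ, ‖-(Complex.I) * z‖ = ‖z‖ := by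
    intro z; rw [norm_mul, norm_neg, Complex.norm_I, one_mul]
  have hf1ub : ∀ s : ℝ, s₀ ≤ s → |f1 s| ≤ M ^ 2 + Mt ^ 2 := by
    intro s hs
    have cip : Continuous (fun t => 2 * ip (v s t) (-(Complex.I) * pdt v s t)) :=
      continuous_const.mul (continuous_ip (cv_s s) (continuous_const.mul (cpdt_s s)))
    have h1 : |f1 s| ≤ ∫ t in (0:ℝ)..1, |2 * ip (v s t) (-(Complex.I) * pdt v s t)| :=
      intervalIntegral.abs_integral_le_integral_abs (by norm_num)
    have h2 : (∫ t in (0:ℝ)..1, |2 * ip (v s t) (-(Complex.I) * pdt v s t)|)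
        ≤ ∫ _t in (0:ℝ)..1, (M ^ 2 + Mt ^ 2) := by
      refine intervalIntegral.integral_mono_on (by norm_num)
        (cip.abs.intervalIntegrable 0 1) intervalIntegrable_const ?_
      intro t ht
      have hy := young (v s t) (-(Complex.I) * pdt v s t) one_pos
      have hv2 : ‖v s t‖ ^ 2 ≤ M ^ 2 := pow_le_pow_left₀ (norm_nonneg _) (hM s t hs) 2
      have hp2 : ‖pdt v s t‖ ^ 2 ≤ Mt ^ 2 :=
        pow_le_pow_left₀ (norm_nonneg _) (hMt s t hs ht) 2
      rw [hnI] at hy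
      calc |2 * ip (v s t) (-(Complex.I) * pdt v s t)|
          ≤ 1 * ‖v s t‖ ^ 2 + (1/1) * ‖pdt v s t‖ ^ 2 := hy
        _ ≤ M ^ 2 + Mt ^ 2 := by linarith
    have h3 : (∫ _t in (0:ℝ)..1, (M ^ 2 + Mt ^ 2)) = M ^ 2 + Mt ^ 2 := by simp
    linarith
  -- the constants
  have hPmin : ρ < min δ (1/2) := lt_min hρδ hρhalf
  have hPpos : 0 < min δ (1/2) := lt_min hδ (by norm_num)
  set ρt : ℝ := (ρ + min δ (1/2)) / 2 with hρtdef
  have hρt0 : 0 < ρt := by rw [hρtdef]; linarith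
  have hρtρ : ρ < ρt := by rw [hρtdef]; linarith
  have hρth : ρt < 1/2 := by
    have h1 : min δ (1/2) ≤ 1/2 := min_le_right _ _
    rw [hρtdef]; linarith
  have hρtδ : ρt < δ := by
    have h1 : min δ (1/2) ≤ δ := min_le_left _ _
    rw [hρtdef]; linarith
  have h4ρt : 4 * ρt ^ 2 < 1 := by nlinarith
  set η : ℝ := (1 - 4 * ρt ^ 2) / (4 * ρt) with hηdef
  have hηpos : 0 < η := div_pos (by linarith) (by linarith)
  set κ : ℝ := (1 - 4 * ρt ^ 2) / 2 with hκdef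
  have hκpos : 0 < κ := by rw [hκdef]; linarith
  have hηκ : 2 * ρt * η = κ := by
    rw [hηdef, hκdef]; field_simp; ring
  set L : ℝ := min (2 * δ) (ρt + 1/2) with hLdef
  have hL1 : 2 * ρt < L := lt_min (by linarith) (by linarith)
  have hL2δ : L ≤ 2 * δ := min_le_left _ _
  have hLpos : 0 < L := by linarith
  set C₁ : ℝ := C₀ ^ 2 * Real.exp ((L - 2 * δ) * s₀) with hC₁def
  have hC₁0 : 0 ≤ C₁ := by positivity
  have he_bound : ∀ s : ℝ, s₀ ≤ s → e s ≤ C₁ * Real.exp (-L * s) := by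
    intro s hs
    refine le_trans (he_bound0 s hs) ?_
    have := exp_decay_trans (A := C₀ ^ 2) (a := L) (b := 2 * δ) (s₀ := s₀) (s := s)
      (by positivity) hL2δ hs
    rw [hC₁def]
    exact this
  set B : ℝ := (4 + 2 * ρt / η) * C₁ / (L + 2 * ρt) with hBdef
  have hcoef : 0 ≤ 4 + 2 * ρt / η := by positivity
  have hB0 : 0 ≤ B := div_nonneg (mul_nonneg hcoef hC₁0) (by linarith)
  have hBeq : B * (L + 2 * ρt) = (4 + 2 * ρt / η) * C₁ := by
    rw [hBdef]; field_simp
  have hBe : ∀ s : ℝ, s₀ ≤ s →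
      (4 + 2 * ρt / η) * e s ≤ B * (L + 2 * ρt) * Real.exp (-L * s) := by
    intro s hs
    rw [hBeq, mul_assoc]
    exact mul_le_mul_of_nonneg_left (he_bound s hs) hcoef
  -- the convexity-type functional
  set φ : ℝ → ℝ := fun s => f1 s + 2 * ρt * f s - B * Real.exp (-L * s) with hφdef
  set dφ : ℝ → ℝ := fun s => df1 s + 2 * ρt * (f1 s + r s) + B * L * Real.exp (-L * s)
    with hdφdef
  have hexpD : ∀ c x : ℝ, HasDerivAt (fun s => Real.exp (c * s)) (c * Real.exp (c * x)) x := by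
    intro c x
    have h := ((hasDerivAt_id x).const_mul c).exp
    simpa [mul_comm] using h
  have hφd : ∀ x : ℝ, HasDerivAt φ (dφ x) x := by
    intro x
    have h1 := (hf1d x).add ((hfd x).const_mul (2 * ρt))
    have h2 := (hexpD (-L) x).const_mul B
    have h3 := h1.sub h2
    have hval : dφ x = df1 x + 2 * ρt * (f1 x + r x) - B * (-L * Real.exp (-L * x)) := by
      show df1 x + 2 * ρt * (f1 x + r x) + B * L * Real.exp (-L * x)
        = df1 x + 2 * ρt * (f1 x + r x) - B * (-L * Real.exp (-L * x))
      ring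
    rw [hval]
    exact h3
  have hφkey : ∀ s : ℝ, s₀ ≤ s → 2 * ρt * φ s + κ * f s ≤ dφ s := by
    intro s hs
    have A1 : f s - 4 * e s ≤ df1 s := hdf1_lb s hs
    have h2r : -(η * f s + (1/η) * e s) ≤ r s := (abs_le.1 (hr_bound η hηpos s)).1
    have h2r' := mul_le_mul_of_nonneg_left h2r (by linarith : (0:ℝ) ≤ 2 * ρt)
    have heq1 : 2 * ρt * (-(η * f s + (1/η) * e s)) = -(κ * f s + (2 * ρt / η) * e s) := by
      rw [← hηκ]; field_simp
    have A2 : -(κ * f s + (2 * ρt / η) * e s) ≤ 2 * ρt * r s := by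
      rw [← heq1]; exact h2r'
    have A3 := hBe s hs
    have hkf : 2 * (κ * f s) = f s - 4 * ρt ^ 2 * f s := by rw [hκdef]; ring
    have hφs : φ s = f1 s + 2 * ρt * f s - B * Real.exp (-L * s) := rfl
    have hdφs : dφ s = df1 s + 2 * ρt * (f1 s + r s) + B * L * Real.exp (-L * s) := rfl
    rw [hφs, hdφs]
    linarith [A1, A2, A3, hkf]
  -- the monotone auxiliary function
  set ψ : ℝ → ℝ := fun s => φ s * Real.exp (-(2 * ρt) * s) with hψdef
  have hψd : ∀ x : ℝ, HasDerivAt ψ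
      (dφ x * Real.exp (-(2 * ρt) * x) + φ x * (-(2 * ρt) * Real.exp (-(2 * ρt) * x))) x :=
    fun x => (hφd x).mul (hexpD (-(2 * ρt)) x)
  have hψmono : MonotoneOn ψ (Set.Ici s₀) := by
    refine monotoneOn_of_deriv_nonneg (convex_Ici s₀) ?_ ?_ ?_
    · exact (continuous_iff_continuousAt.2 fun x => (hψd x).continuousAt).continuousOn
    · intro x hx
      exact (hψd x).differentiableAt.differentiableWithinAt
    · intro x hx
      rw [interior_Ici] at hx
      rw [(hψd x).deriv]
      have hx' : s₀ ≤ x := le_of_lt hx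
      have h1 : 0 ≤ dφ x - 2 * ρt * φ x := by
        have h0 := hφkey x hx'
        have h0' := mul_nonneg hκpos.le (hf_nonneg x)
        linarith
      have h2 : 0 ≤ (dφ x - 2 * ρt * φ x) * Real.exp (-(2 * ρt) * x) :=
        mul_nonneg h1 (Real.exp_nonneg _)
      have h3 : dφ x * Real.exp (-(2 * ρt) * x) + φ x * (-(2 * ρt) * Real.exp (-(2 * ρt) * x))
          = (dφ x - 2 * ρt * φ x) * Real.exp (-(2 * ρt) * x) := by ring
      rw [h3]
      exact h2
  -- φ is nonpositive on [s₀, ∞)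
  have hφle : ∀ s : ℝ, s₀ ≤ s → φ s ≤ 0 := by
    by_contra hcon
    push_neg at hcon
    obtain ⟨s₁, hs₁, hφpos⟩ := hcon
    set K : ℝ := M ^ 2 + Mt ^ 2 + M ^ 2 with hKdef
    have hK : ∀ s : ℝ, s₀ ≤ s → φ s ≤ K := by
      intro s hs
      have h1 : f1 s ≤ M ^ 2 + Mt ^ 2 := le_trans (le_abs_self _) (hf1ub s hs)
      have h2 : 2 * ρt * f s ≤ 1 * f s :=
        mul_le_mul_of_nonneg_right (by linarith) (hf_nonneg s)
      have h3 : 0 ≤ B * Real.exp (-L * s) := mul_nonneg hB0 (Real.exp_nonneg _)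
      have hφs : φ s = f1 s + 2 * ρt * f s - B * Real.exp (-L * s) := rfl
      rw [hφs, hKdef]
      have h4 := hfub s hs
      linarith
    have hcpos : 0 < ψ s₁ := mul_pos hφpos (Real.exp_pos _)
    have htd : Filter.Tendsto (fun s => K * Real.exp (-(2 * ρt) * s))
        Filter.atTop (nhds 0) := by
      have h1 : Filter.Tendsto (fun s : ℝ => (2 * ρt) * s) Filter.atTop Filter.atTop :=
        Filter.Tendsto.const_mul_atTop (by linarith) Filter.tendsto_id
      have h2 : Filter.Tendsto (fun s : ℝ => Real.exp (-(2 * ρt) * s))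
          Filter.atTop (nhds 0) := by
        have h3 := Real.tendsto_exp_atBot.comp
          (Filter.tendsto_neg_atTop_atBot.comp h1)
        have h4 : (Real.exp ∘ Neg.neg ∘ fun s : ℝ => 2 * ρt * s)
            = fun s : ℝ => Real.exp (-(2 * ρt) * s) := by
          funext s; simp [Function.comp, neg_mul]
        rwa [h4] at h3
      simpa using h2.const_mul K
    obtain ⟨s₂, hs₂lt, hs₂ge⟩ :=
      ((htd.eventually (gt_mem_nhds hcpos)).and (Filter.eventually_ge_atTop s₁)).exists
    have hmono := hψmono (Set.mem_Ici.2 hs₁)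
      (Set.mem_Ici.2 (le_trans hs₁ hs₂ge)) hs₂ge
    have hup : ψ s₂ ≤ K * Real.exp (-(2 * ρt) * s₂) := by
      have hψs : ψ s₂ = φ s₂ * Real.exp (-(2 * ρt) * s₂) := rfl
      rw [hψs]
      exact mul_le_mul_of_nonneg_right (hK s₂ (le_trans hs₁ hs₂ge)) (Real.exp_nonneg _)
    linarith
  -- from φ ≤ 0 derive the decay of f
  set η₂ : ℝ := ρt - ρ with hη₂def
  have hη₂pos : 0 < η₂ := by rw [hη₂def]; linarith
  set α : ℝ := ρt + ρ with hαdef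
  have hαρ : 2 * ρ < α := by rw [hαdef]; linarith
  set L' : ℝ := min L ((α + 2 * ρ) / 2) with hL'def
  have hL'ρ : 2 * ρ < L' := by
    refine lt_min (by linarith) ?_
    rw [hαdef]; linarith
  have hL'α : L' < α := by
    refine lt_of_le_of_lt (min_le_right _ _) ?_
    linarith
  have hL'L : L' ≤ L := min_le_left _ _
  have hL'2δ : L' ≤ 2 * δ := le_trans hL'L hL2δ
  set B₂ : ℝ := B * Real.exp ((L' - L) * s₀) + (C₀ ^ 2 / η₂) * Real.exp ((L' - 2 * δ) * s₀)
    with hB₂def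
  have hB₂0 : 0 ≤ B₂ := by positivity
  have hf'ub : ∀ s : ℝ, s₀ ≤ s → f1 s + r s ≤ -α * f s + B₂ * Real.exp (-L' * s) := by
    intro s hs
    have h1 : f1 s ≤ -(2 * ρt) * f s + B * Real.exp (-L * s) := by
      have := hφle s hs
      have hφs : φ s = f1 s + 2 * ρt * f s - B * Real.exp (-L * s) := rfl
      rw [hφs] at this
      linarith
    have h2 : r s ≤ η₂ * f s + (1/η₂) * e s := le_trans (le_abs_self _) (hr_bound η₂ hη₂pos s)
    have h3 : B * Real.exp (-L * s) ≤ (B * Real.exp ((L' - L) * s₀)) * Real.exp (-L' * s) :=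
      exp_decay_trans hB0 hL'L hs
    have h4 : (1/η₂) * e s ≤ ((C₀ ^ 2 / η₂) * Real.exp ((L' - 2 * δ) * s₀))
        * Real.exp (-L' * s) := by
      have h5 : (1/η₂) * e s ≤ (1/η₂) * (C₀ ^ 2 * Real.exp (-(2 * δ) * s)) :=
        mul_le_mul_of_nonneg_left (he_bound0 s hs) (by positivity)
      have h6 := exp_decay_trans (A := (1/η₂) * C₀ ^ 2) (a := L') (b := 2 * δ) (s₀ := s₀)
        (s := s) (by positivity) hL'2δ hs
      have h7 : (1/η₂) * (C₀ ^ 2 * Real.exp (-(2 * δ) * s))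
          = ((1/η₂) * C₀ ^ 2) * Real.exp (-(2 * δ) * s) := by ring
      have h8 : ((1/η₂) * C₀ ^ 2) * Real.exp ((L' - 2 * δ) * s₀)
          = (C₀ ^ 2 / η₂) * Real.exp ((L' - 2 * δ) * s₀) := by ring
      rw [h7] at h5
      rw [h8] at h6
      exact le_trans h5 h6
    have hαeq : -α * f s = -(2 * ρt) * f s + η₂ * f s := by rw [hαdef, hη₂def]; ring
    have hB₂s : B₂ * Real.exp (-L' * s) = (B * Real.exp ((L' - L) * s₀)) * Real.exp (-L' * s)
        + ((C₀ ^ 2 / η₂) * Real.exp ((L' - 2 * δ) * s₀)) * Real.exp (-L' * s) := by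
      rw [hB₂def]; ring
    clear_value η₂ α L' B₂ B L
    linarith only [h1, h2, h3, h4, hαeq, hB₂s]
  -- final comparison function
  have hαL'pos : 0 < α - L' := by linarith
  set B₃ : ℝ := B₂ / (α - L') with hB₃def
  have hB₃0 : 0 ≤ B₃ := div_nonneg hB₂0 (by linarith)
  set H : ℝ → ℝ := fun s => Real.exp (α * s) * f s - B₃ * Real.exp ((α - L') * s) with hHdef
  have hHd : ∀ x : ℝ, HasDerivAt H
      ((α * Real.exp (α * x) * f x + Real.exp (α * x) * (f1 x + r x))
        - B₃ * ((α - L') * Real.exp ((α - L') * x))) x := by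
    intro x
    exact ((hexpD α x).mul (hfd x)).sub ((hexpD (α - L') x).const_mul B₃)
  have hHnp : ∀ x : ℝ, s₀ ≤ x →
      (α * Real.exp (α * x) * f x + Real.exp (α * x) * (f1 x + r x))
        - B₃ * ((α - L') * Real.exp ((α - L') * x)) ≤ 0 := by
    intro x hx
    have hE : Real.exp (α * x) * Real.exp (-L' * x) = Real.exp ((α - L') * x) := by
      rw [← Real.exp_add]; congr 1; ring
    have h5 := mul_le_mul_of_nonneg_left (hf'ub x hx) (Real.exp_nonneg (α * x))
    have heq : Real.exp (α * x) * (-α * f x + B₂ * Real.exp (-L' * x))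
        = -(α * Real.exp (α * x) * f x) + B₂ * Real.exp ((α - L') * x) := by
      rw [← hE]; ring
    have h6 : B₃ * (α - L') = B₂ := by
      rw [hB₃def]; field_simp
    have h7 : B₃ * ((α - L') * Real.exp ((α - L') * x)) = B₂ * Real.exp ((α - L') * x) := by
      rw [← h6]; ring
    clear_value α L' B₂ B₃
    linarith only [h5, heq, h7]
  have hHanti : AntitoneOn H (Set.Ici s₀) := by
    refine antitoneOn_of_deriv_nonpos (convex_Ici s₀) ?_ ?_ ?_
    · exact (continuous_iff_continuousAt.2 fun x => (hHd x).continuousAt).continuousOn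
    · intro x hx
      exact (hHd x).differentiableAt.differentiableWithinAt
    · intro x hx
      rw [interior_Ici] at hx
      rw [(hHd x).deriv]
      exact hHnp x (le_of_lt hx)
  set A₀ : ℝ := max (H s₀) 0 with hA₀def
  have hA₀0 : 0 ≤ A₀ := le_max_right _ _
  set C₂ : ℝ := A₀ * Real.exp ((L' - α) * s₀) + B₃ + 1 with hC₂def
  have hC₂pos : 0 < C₂ := by
    have h1 : 0 ≤ A₀ * Real.exp ((L' - α) * s₀) := mul_nonneg hA₀0 (Real.exp_nonneg _)
    rw [hC₂def]; linarith only [h1, hB₃0]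
  have hfdecay : ∀ s : ℝ, s₀ ≤ s → f s ≤ C₂ * Real.exp (-L' * s) := by
    intro s hs
    have h1 : H s ≤ H s₀ := hHanti (Set.mem_Ici.2 le_rfl) (Set.mem_Ici.2 hs) hs
    have hHs : H s = Real.exp (α * s) * f s - B₃ * Real.exp ((α - L') * s) := rfl
    have h2 : Real.exp (α * s) * f s ≤ A₀ + B₃ * Real.exp ((α - L') * s) := by
      have h3 : H s₀ ≤ A₀ := le_max_left _ _
      rw [hHs] at h1
      linarith
    have h4 := mul_le_mul_of_nonneg_left h2 (Real.exp_nonneg (-α * s))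
    have h5 : Real.exp (-α * s) * (Real.exp (α * s) * f s) = f s := by
      rw [← mul_assoc, ← Real.exp_add]
      norm_num
    have h6 : Real.exp (-α * s) * (B₃ * Real.exp ((α - L') * s))
        = B₃ * Real.exp (-L' * s) := by
      rw [mul_comm (Real.exp (-α * s)) _, mul_assoc, ← Real.exp_add]
      congr 2
      ring
    have h7 : A₀ * Real.exp (-α * s) ≤ (A₀ * Real.exp ((L' - α) * s₀)) * Real.exp (-L' * s) :=
      exp_decay_trans hA₀0 (le_of_lt hL'α) hs
    have h8 : 0 < Real.exp (-L' * s) := Real.exp_pos _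
    have h9 : C₂ * Real.exp (-L' * s) = (A₀ * Real.exp ((L' - α) * s₀)) * Real.exp (-L' * s)
        + B₃ * Real.exp (-L' * s) + Real.exp (-L' * s) := by
      rw [hC₂def]; ring
    rw [mul_add, h5, h6] at h4
    have h10 : Real.exp (-α * s) * A₀ = A₀ * Real.exp (-α * s) := by ring
    rw [h10] at h4
    clear_value A₀ B₃ C₂ α L'
    linarith only [h4, h7, h8, h9]
  -- conclusions
  have hfcont : Continuous f :=
    continuous_iff_continuousAt.2 fun x => (hfd x).continuousAt
  constructor
  · have hfun : (fun s => Real.exp (2 * ρ * s) * (l2norm (v s)) ^ 2)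
        = fun s => Real.exp (2 * ρ * s) * f s := funext fun s => by rw [hl2 s]
    rw [hfun]
    have hpos : 0 < L' - 2 * ρ := by linarith
    have hmaj : IntegrableOn (fun s => C₂ * Real.exp (-(L' - 2 * ρ) * s)) (Set.Ici s₀) := by
      rw [integrableOn_Ici_iff_integrableOn_Ioi]
      exact (exp_neg_integrableOn_Ioi s₀ hpos).const_mul C₂
    have hcont2 : Continuous (fun s => Real.exp (2 * ρ * s) * f s) :=
      (Real.continuous_exp.comp (continuous_const.mul continuous_id)).mul hfcont
    refine Integrable.mono' hmaj hcont2.aestronglyMeasurable ?_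
    refine (ae_restrict_iff' measurableSet_Ici).2 (Filter.Eventually.of_forall fun s hs => ?_)
    have hnn : 0 ≤ Real.exp (2 * ρ * s) * f s :=
      mul_nonneg (Real.exp_nonneg _) (hf_nonneg s)
    rw [Real.norm_eq_abs, abs_of_nonneg hnn]
    have h1 : Real.exp (2 * ρ * s) * f s ≤ Real.exp (2 * ρ * s) * (C₂ * Real.exp (-L' * s)) :=
      mul_le_mul_of_nonneg_left (hfdecay s hs) (Real.exp_nonneg _)
    have h2 : Real.exp (2 * ρ * s) * (C₂ * Real.exp (-L' * s))
        = C₂ * Real.exp (-(L' - 2 * ρ) * s) := by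
      rw [mul_comm (Real.exp (2 * ρ * s)) _, mul_assoc, ← Real.exp_add]
      congr 2
      ring
    rw [h2] at h1
    exact h1
  · refine ⟨C₂ * Real.exp ((2 * ρ - L') * s₀), mul_pos hC₂pos (Real.exp_pos _), fun s hs => ?_⟩
    have hfun : (∫ σ in s..(s + 1), (l2norm (v σ)) ^ 2) = ∫ σ in s..(s + 1), f σ :=
      intervalIntegral.integral_congr (fun σ _ => hl2 σ)
    rw [hfun]
    have h1 : (∫ σ in s..(s + 1), f σ) ≤ ∫ _σ in s..(s + 1), C₂ * Real.exp (-L' * s) := by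
      refine intervalIntegral.integral_mono_on (by linarith)
        (hfcont.intervalIntegrable s (s+1)) intervalIntegrable_const ?_
      intro σ hσ
      refine le_trans (hfdecay σ (le_trans hs hσ.1)) ?_
      refine mul_le_mul_of_nonneg_left ?_ (le_of_lt hC₂pos)
      rw [Real.exp_le_exp]
      have hL'pos : 0 < L' := by linarith only [hL'ρ, hρ0]
      have hmul := mul_le_mul_of_nonneg_left hσ.1 (le_of_lt hL'pos)
      linarith only [hmul]
    have h2 : (∫ _σ in s..(s + 1), C₂ * Real.exp (-L' * s)) = C₂ * Real.exp (-L' * s) := by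
      simp
    have h3 : C₂ * Real.exp (-L' * s)
        ≤ (C₂ * Real.exp ((2 * ρ - L') * s₀)) * Real.exp (-(2 * ρ) * s) :=
      exp_decay_trans (le_of_lt hC₂pos) (le_of_lt hL'ρ) hs
    have h4 : Real.exp (-(2 * ρ) * s) = Real.exp (-2 * ρ * s) := by
      congr 1; ring
    rw [h4] at h3
    linarith only [h1, h2, h3]
end

section
/- Let s₀ ∈ ℝ and let v : [s₀,∞) × ℝ → ℂ be a smooth bounded map with v(s, t+1) = v(s, t), with ∫₀¹ v(s,t) dt = 0 for every s ≥ s₀, and with ∂ₜv(s,t) → 0 as s → ∞ uniformly in t. Set g := ∂ₛv + i·∂ₜv and suppose ∫_{s₀}^∞ ‖g(s,·)‖_{L²}² ds < ∞. Then s ↦ ‖v(s,·)‖_{L²} is square-integrable on [s₀,∞), and moreover ∫_{s₀}^∞ ‖v(s,·)‖_{L²}² ds ≤ ∫_{s₀}^∞ ‖g(s,·)‖_{L²}² ds + ⟨v(s₀,·), i·∂ₜv(s₀,·)⟩_{L²}. -/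
open MeasureTheory

/-- The real `L²` inner product of two (1-periodic) functions over `t ∈ [0,1]`,
where `ℂ` is regarded as `ℝ²` with its real inner product. -/
noncomputable def l2inner (f g : ℝ → ℂ) : ℝ :=
  ∫ t in (0:ℝ)..1, ((f t).re * (g t).re + (f t).im * (g t).im)

/-- real inner product on ℂ ≅ ℝ² -/
def rinn (a b : ℂ) : ℝ := a.re * b.re + a.im * b.im

section infra
variable {v : ℝ → ℝ → ℂ} (h : ContDiff ℝ (⊤ : ℕ∞) (Function.uncurry v))
include h

theorem hwz_hasDerivAt_s (s t : ℝ) :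
    HasDerivAt (fun σ => v σ t) (fderiv ℝ (Function.uncurry v) (s, t) (1, 0)) s := by
  have hline : HasDerivAt (fun σ : ℝ => (σ, t)) ((1 : ℝ), (0 : ℝ)) s :=
    (hasDerivAt_id s).prodMk (hasDerivAt_const s t)
  exact ((h.differentiable (by simp) (s, t)).hasFDerivAt).comp_hasDerivAt s hline

theorem hwz_hasDerivAt_t (s t : ℝ) :
    HasDerivAt (fun τ => v s τ) (fderiv ℝ (Function.uncurry v) (s, t) (0, 1)) t := by
  have hline : HasDerivAt (fun τ : ℝ => (s, τ)) ((0 : ℝ), (1 : ℝ)) t :=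
    (hasDerivAt_const t s).prodMk (hasDerivAt_id t)
  exact ((h.differentiable (by simp) (s, t)).hasFDerivAt).comp_hasDerivAt t hline

theorem pds_eq (s t : ℝ) : pds v s t = fderiv ℝ (Function.uncurry v) (s, t) (1, 0) :=
  (hwz_hasDerivAt_s h s t).deriv

theorem pdt_eq (s t : ℝ) : pdt v s t = fderiv ℝ (Function.uncurry v) (s, t) (0, 1) :=
  (hwz_hasDerivAt_t h s t).deriv

theorem hwz_fderiv_contDiff : ContDiff ℝ (⊤ : ℕ∞) (fderiv ℝ (Function.uncurry v)) :=
  h.fderiv_right ((by simp))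

theorem pds_cont : Continuous (fun p : ℝ × ℝ => pds v p.1 p.2) := by
  have : (fun p : ℝ × ℝ => pds v p.1 p.2)
      = fun p : ℝ × ℝ => fderiv ℝ (Function.uncurry v) p ((1 : ℝ), (0 : ℝ)) := by
    funext p; exact pds_eq h p.1 p.2
  rw [this]
  exact ((hwz_fderiv_contDiff h).clm_apply contDiff_const).continuous

theorem pdt_cont : Continuous (fun p : ℝ × ℝ => pdt v p.1 p.2) := by
  have : (fun p : ℝ × ℝ => pdt v p.1 p.2)
      = fun p : ℝ × ℝ => fderiv ℝ (Function.uncurry v) p ((0 : ℝ), (1 : ℝ)) := by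
    funext p; exact pdt_eq h p.1 p.2
  rw [this]
  exact ((hwz_fderiv_contDiff h).clm_apply contDiff_const).continuous

/-- mixed second partial -/
noncomputable def pst (v : ℝ → ℝ → ℂ) (s t : ℝ) : ℂ :=
  fderiv ℝ (fderiv ℝ (Function.uncurry v)) (s, t) (1, 0) (0, 1)

theorem pst_cont : Continuous (fun p : ℝ × ℝ => pst v p.1 p.2) := by
  have h2 : ContDiff ℝ (⊤ : ℕ∞) (fderiv ℝ (fderiv ℝ (Function.uncurry v))) :=
    (hwz_fderiv_contDiff h).fderiv_right (by simp)
  exact (((h2.clm_apply contDiff_const).clm_apply contDiff_const)).continuous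

theorem hasDerivAt_s_pdt (s t : ℝ) : HasDerivAt (fun σ => pdt v σ t) (pst v s t) s := by
  have hDv := hwz_fderiv_contDiff h
  have hD2 : HasFDerivAt (fderiv ℝ (Function.uncurry v))
      (fderiv ℝ (fderiv ℝ (Function.uncurry v)) (s, t)) (s, t) :=
    (hDv.differentiable (by simp) (s, t)).hasFDerivAt
  have hline : HasDerivAt (fun σ : ℝ => (σ, t)) ((1 : ℝ), (0 : ℝ)) s :=
    (hasDerivAt_id s).prodMk (hasDerivAt_const s t)
  have happ : HasFDerivAt (fun p : ℝ × ℝ => fderiv ℝ (Function.uncurry v) p ((0:ℝ), (1:ℝ)))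
      ((fderiv ℝ (fderiv ℝ (Function.uncurry v)) (s, t)).flip ((0:ℝ), (1:ℝ))) (s, t) := by
    have := hD2.clm_apply (hasFDerivAt_const ((0:ℝ),(1:ℝ)) (s,t))
    simpa using this
  have this2 : HasDerivAt (fun σ : ℝ => fderiv ℝ (Function.uncurry v) (σ, t) ((0:ℝ), (1:ℝ)))
      ((fderiv ℝ (fderiv ℝ (Function.uncurry v)) (s, t)).flip ((0:ℝ),(1:ℝ)) ((1:ℝ),(0:ℝ))) s := by
    exact happ.comp_hasDerivAt s hline
  have heq : (fun σ : ℝ => fderiv ℝ (Function.uncurry v) (σ, t) ((0:ℝ), (1:ℝ)))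
      = fun σ => pdt v σ t := by
    funext σ; exact (pdt_eq h σ t).symm
  rw [heq] at this2
  simpa [pst] using this2

theorem hasDerivAt_t_pds (s t : ℝ) : HasDerivAt (fun τ => pds v s τ) (pst v s t) t := by
  have hDv := hwz_fderiv_contDiff h
  have hD2 : HasFDerivAt (fderiv ℝ (Function.uncurry v))
      (fderiv ℝ (fderiv ℝ (Function.uncurry v)) (s, t)) (s, t) :=
    (hDv.differentiable (by simp) (s, t)).hasFDerivAt
  have hline : HasDerivAt (fun τ : ℝ => (s, τ)) ((0 : ℝ), (1 : ℝ)) t :=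
    (hasDerivAt_const t s).prodMk (hasDerivAt_id t)
  have happ : HasFDerivAt (fun p : ℝ × ℝ => fderiv ℝ (Function.uncurry v) p ((1:ℝ), (0:ℝ)))
      ((fderiv ℝ (fderiv ℝ (Function.uncurry v)) (s, t)).flip ((1:ℝ), (0:ℝ))) (s, t) := by
    have := hD2.clm_apply (hasFDerivAt_const ((1:ℝ),(0:ℝ)) (s,t))
    simpa using this
  have this2 : HasDerivAt (fun τ : ℝ => fderiv ℝ (Function.uncurry v) (s, τ) ((1:ℝ), (0:ℝ)))
      ((fderiv ℝ (fderiv ℝ (Function.uncurry v)) (s, t)).flip ((1:ℝ),(0:ℝ)) ((0:ℝ),(1:ℝ))) t := by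
    exact happ.comp_hasDerivAt t hline
  have heq : (fun τ : ℝ => fderiv ℝ (Function.uncurry v) (s, τ) ((1:ℝ), (0:ℝ)))
      = fun τ => pds v s τ := by
    funext τ; exact (pds_eq h s τ).symm
  rw [heq] at this2
  have hsymm : fderiv ℝ (fderiv ℝ (Function.uncurry v)) (s, t) ((0:ℝ),(1:ℝ)) ((1:ℝ),(0:ℝ))
      = pst v s t := by
    unfold pst
    exact (second_derivative_symmetric
      (fun y => (h.differentiable (by simp) y).hasFDerivAt) hD2 _ _).symm
  rw [← hsymm]
  simpa using this2

end infra
-- rinn pointwise algebra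
theorem rinn_I_swap (a b : ℂ) : rinn a (Complex.I * b) = - rinn b (Complex.I * a) := by
  simp [rinn, Complex.mul_re, Complex.mul_im]; ring

theorem norm_sq_complex (a : ℂ) : ‖a‖ ^ 2 = a.re ^ 2 + a.im ^ 2 := by
  rw [← Complex.normSq_eq_norm_sq, Complex.normSq_apply]; ring

theorem norm_add_I_sq (a b : ℂ) :
    ‖a + Complex.I * b‖ ^ 2 = ‖a‖ ^ 2 + ‖b‖ ^ 2 + 2 * rinn a (Complex.I * b) := by
  simp only [norm_sq_complex, rinn, Complex.add_re, Complex.add_im, Complex.mul_re,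
    Complex.mul_im, Complex.I_re, Complex.I_im]
  ring

theorem abs_rinn_le (a b : ℂ) : |rinn a b| ≤ ‖a‖ * ‖b‖ := by
  have ha := norm_sq_complex a
  have hb := norm_sq_complex b
  have h1 : rinn a b ^ 2 ≤ (‖a‖ * ‖b‖) ^ 2 := by
    simp only [rinn]; nlinarith [sq_nonneg (a.re * b.im - a.im * b.re)]
  have h2 : (0:ℝ) ≤ ‖a‖ * ‖b‖ := mul_nonneg (norm_nonneg _) (norm_nonneg _)
  nlinarith [abs_nonneg (rinn a b), sq_abs (rinn a b)]

-- Cauchy-Schwarz on an interval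
theorem cs_interval {w : ℝ → ℝ} (hw : Continuous w) {α β : ℝ} (hαβ : α ≤ β) :
    (∫ x in α..β, w x) ^ 2 ≤ (β - α) * ∫ x in α..β, (w x) ^ 2 := by
  rcases eq_or_lt_of_le hαβ with rfl | hlt
  · simp
  · set J := ∫ x in α..β, w x with hJ
    set c : ℝ := J / (β - α) with hc
    have hβα : 0 < β - α := by linarith
    have hint2 : IntervalIntegrable (fun x => (w x) ^ 2) volume α β :=
      (hw.pow 2).intervalIntegrable _ _
    have hint1 : IntervalIntegrable w volume α β := hw.intervalIntegrable _ _
    have h0 : 0 ≤ ∫ x in α..β, (w x - c) ^ 2 :=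
      intervalIntegral.integral_nonneg hαβ (fun x _ => sq_nonneg _)
    have hexp : (∫ x in α..β, (w x - c) ^ 2)
        = (∫ x in α..β, (w x) ^ 2) - 2 * c * J + c ^ 2 * (β - α) := by
      have : (fun x => (w x - c) ^ 2) = fun x => (w x) ^ 2 - (2 * c) * w x + c ^ 2 := by
        funext x; ring
      rw [this, intervalIntegral.integral_add (hint2.sub (hint1.const_mul _))
        (intervalIntegrable_const), intervalIntegral.integral_sub hint2 (hint1.const_mul _),
        intervalIntegral.integral_const_mul, intervalIntegral.integral_const]
      simp [← hJ]; ring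
    rw [hexp] at h0
    have hcJ : c * (β - α) = J := by rw [hc, div_mul_cancel₀ J (ne_of_gt hβα)]
    nlinarith [h0, sq_nonneg J]

-- Poincaré for scalar functions
theorem poincare_real {u u' : ℝ → ℝ} (hu : ∀ t, HasDerivAt u (u' t) t) (hc : Continuous u')
    (hmean : ∫ t in (0:ℝ)..1, u t = 0) :
    ∫ t in (0:ℝ)..1, (u t) ^ 2 ≤ ∫ t in (0:ℝ)..1, (u' t) ^ 2 := by
  have hu_cont : Continuous u := by
    rw [continuous_iff_continuousAt]; exact fun t => (hu t).continuousAt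
  -- there is a zero of u in [0,1]
  obtain ⟨a, ha, hua⟩ : ∃ a ∈ Set.Icc (0:ℝ) 1, u a = 0 := by
    by_contra hcon
    push_neg at hcon
    have hsign : (∀ x ∈ Set.Icc (0:ℝ) 1, 0 < u x) ∨ (∀ x ∈ Set.Icc (0:ℝ) 1, u x < 0) := by
      by_cases h0 : 0 < u 0
      · left
        intro x hx
        by_contra hle
        push_neg at hle
        have hlt : u x < 0 := lt_of_le_of_ne hle (hcon x hx)
        have := intermediate_value_Icc' hx.1 (hu_cont.continuousOn (s := Set.Icc 0 x))
        have h0mem : (0:ℝ) ∈ Set.Icc (u x) (u 0) := ⟨le_of_lt hlt, le_of_lt h0⟩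
        obtain ⟨z, hz, hz0⟩ := this h0mem
        exact hcon z (Set.Icc_subset_Icc le_rfl hx.2 hz) hz0
      · right
        push_neg at h0
        have h0' : u 0 < 0 := lt_of_le_of_ne h0 (hcon 0 ⟨le_rfl, zero_le_one⟩)
        intro x hx
        by_contra hle
        push_neg at hle
        have hlt : 0 < u x := lt_of_le_of_ne hle (Ne.symm (hcon x hx))
        have := intermediate_value_Icc hx.1 (hu_cont.continuousOn (s := Set.Icc 0 x))
        have h0mem : (0:ℝ) ∈ Set.Icc (u 0) (u x) := ⟨le_of_lt h0', le_of_lt hlt⟩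
        obtain ⟨z, hz, hz0⟩ := this h0mem
        exact hcon z (Set.Icc_subset_Icc le_rfl hx.2 hz) hz0
    rcases hsign with hpos | hneg
    · have : 0 < ∫ t in (0:ℝ)..1, u t :=
        intervalIntegral.intervalIntegral_pos_of_pos_on (hu_cont.intervalIntegrable _ _)
          (fun x hx => hpos x ⟨le_of_lt hx.1, le_of_lt hx.2⟩) zero_lt_one
      linarith [hmean]
    · have : 0 < ∫ t in (0:ℝ)..1, -u t :=
        intervalIntegral.intervalIntegral_pos_of_pos_on ((hu_cont.neg).intervalIntegrable _ _)
          (fun x hx => neg_pos.mpr (hneg x ⟨le_of_lt hx.1, le_of_lt hx.2⟩)) zero_lt_one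
      rw [intervalIntegral.integral_neg, hmean] at this
      simp at this
  -- pointwise bound
  have hint2 : IntervalIntegrable (fun x => (u' x) ^ 2) volume 0 1 :=
    (hc.pow 2).intervalIntegrable _ _
  have key : ∀ t ∈ Set.Icc (0:ℝ) 1, (u t) ^ 2 ≤ ∫ x in (0:ℝ)..1, (u' x) ^ 2 := by
    intro t ht
    rcases le_total a t with hat | hta
    · have hftc : ∫ x in a..t, u' x = u t - u a :=
        intervalIntegral.integral_eq_sub_of_hasDerivAt (fun x _ => hu x)
          (hc.intervalIntegrable _ _)
      have hcs := cs_interval hc hat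
      rw [hftc, hua, sub_zero] at hcs
      have h1 : (t - a) * (∫ x in a..t, (u' x)^2) ≤ 1 * (∫ x in (0:ℝ)..1, (u' x)^2) := by
        apply mul_le_mul (by linarith [ht.2, ha.1]) ?_ ?_ zero_le_one
        · exact intervalIntegral.integral_mono_interval ha.1 hat ht.2
            (Filter.Eventually.of_forall fun x => sq_nonneg _) hint2
        · exact intervalIntegral.integral_nonneg hat (fun x _ => sq_nonneg _)
      calc (u t)^2 ≤ (t - a) * ∫ x in a..t, (u' x)^2 := hcs
        _ ≤ 1 * (∫ x in (0:ℝ)..1, (u' x)^2) := h1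
        _ = _ := one_mul _
    · have hftc : ∫ x in t..a, u' x = u a - u t :=
        intervalIntegral.integral_eq_sub_of_hasDerivAt (fun x _ => hu x)
          (hc.intervalIntegrable _ _)
      have hcs := cs_interval hc hta
      rw [hftc, hua, zero_sub] at hcs
      rw [neg_pow, show ((-1:ℝ))^2 = 1 by norm_num, one_mul] at hcs
      have h1 : (a - t) * (∫ x in t..a, (u' x)^2) ≤ 1 * (∫ x in (0:ℝ)..1, (u' x)^2) := by
        apply mul_le_mul (by linarith [ha.2, ht.1]) ?_ ?_ zero_le_one
        · exact intervalIntegral.integral_mono_interval ht.1 hta ha.2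
            (Filter.Eventually.of_forall fun x => sq_nonneg _) hint2
        · exact intervalIntegral.integral_nonneg hta (fun x _ => sq_nonneg _)
      calc (u t)^2 ≤ (a - t) * ∫ x in t..a, (u' x)^2 := hcs
        _ ≤ 1 * (∫ x in (0:ℝ)..1, (u' x)^2) := h1
        _ = _ := one_mul _
  calc ∫ t in (0:ℝ)..1, (u t)^2
      ≤ ∫ t in (0:ℝ)..1, (∫ x in (0:ℝ)..1, (u' x)^2) := by
        apply intervalIntegral.integral_mono_on zero_le_one
          ((hu_cont.pow 2).intervalIntegrable _ _) intervalIntegrable_const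
        exact fun t ht => key t ht
    _ = ∫ x in (0:ℝ)..1, (u' x)^2 := by simp
-- helpers for rinn calculus
theorem HasDerivAt.cre {f : ℝ → ℂ} {f' : ℂ} {x : ℝ} (hf : HasDerivAt f f' x) :
    HasDerivAt (fun y => (f y).re) f'.re x := by
  exact (Complex.reCLM.hasFDerivAt.comp_hasDerivAt x hf)

theorem HasDerivAt.cim {f : ℝ → ℂ} {f' : ℂ} {x : ℝ} (hf : HasDerivAt f f' x) :
    HasDerivAt (fun y => (f y).im) f'.im x := by
  exact (Complex.imCLM.hasFDerivAt.comp_hasDerivAt x hf)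

theorem HasDerivAt.rinn {f g : ℝ → ℂ} {f' g' : ℂ} {x : ℝ}
    (hf : HasDerivAt f f' x) (hg : HasDerivAt g g' x) :
    HasDerivAt (fun y => rinn (f y) (g y)) (rinn f' (g x) + rinn (f x) g') x := by
  have := (hf.cre.mul hg.cre).add (hf.cim.mul hg.cim)
  refine this.congr_deriv ?_
  all_goals (unfold _root_.rinn; ring)

theorem Continuous.rinn {α : Type*} [TopologicalSpace α] {f g : α → ℂ}
    (hf : Continuous f) (hg : Continuous g) : Continuous fun x => rinn (f x) (g x) :=
  ((Complex.continuous_re.comp hf).mul (Complex.continuous_re.comp hg)).add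
    ((Complex.continuous_im.comp hf).mul (Complex.continuous_im.comp hg))

-- continuity of parametric interval integrals
theorem cont_param {f : ℝ → ℝ → ℝ} (hf : Continuous fun p : ℝ × ℝ => f p.1 p.2) :
    Continuous fun s => ∫ t in (0:ℝ)..1, f s t := by
  have heq : (fun s => ∫ t in (0:ℝ)..1, f s t)
      = fun s => ∫ t in Set.Icc (0:ℝ) 1, f s t := by
    funext s
    rw [intervalIntegral.integral_of_le zero_le_one, ← integral_Icc_eq_integral_Ioc]
  rw [heq]
  exact continuous_parametric_integral_of_continuous hf isCompact_Icc

section gamma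
variable {v : ℝ → ℝ → ℂ} (h : ContDiff ℝ (⊤ : ℕ∞) (Function.uncurry v))

/-- γ(s) = ⟨v(s), i v_t(s)⟩_{L²} -/
noncomputable def gam (v : ℝ → ℝ → ℂ) (s : ℝ) : ℝ :=
  ∫ t in (0:ℝ)..1, rinn (v s t) (Complex.I * pdt v s t)

include h

theorem cont_v : Continuous fun p : ℝ × ℝ => v p.1 p.2 := h.continuous

theorem hds (s t : ℝ) : HasDerivAt (fun σ => v σ t) (pds v s t) s := by
  rw [pds_eq h]; exact hwz_hasDerivAt_s h s t

theorem hdt (s t : ℝ) : HasDerivAt (fun τ => v s τ) (pdt v s t) t := by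
  rw [pdt_eq h]; exact hwz_hasDerivAt_t h s t

theorem contQ : Continuous fun p : ℝ × ℝ =>
    rinn (pds v p.1 p.2) (Complex.I * pdt v p.1 p.2)
      + rinn (v p.1 p.2) (Complex.I * pst v p.1 p.2) :=
  ((pds_cont h).rinn (continuous_const.mul (pdt_cont h))).add
    ((cont_v h).rinn (continuous_const.mul (pst_cont h)))

theorem contP : Continuous fun p : ℝ × ℝ => rinn (v p.1 p.2) (Complex.I * pdt v p.1 p.2) :=
  (cont_v h).rinn (continuous_const.mul (pdt_cont h))

theorem gam_hasDeriv (s : ℝ) :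
    HasDerivAt (gam v) (∫ t in (0:ℝ)..1,
      (rinn (pds v s t) (Complex.I * pdt v s t)
        + rinn (v s t) (Complex.I * pst v s t))) s := by
  set Q : ℝ → ℝ → ℝ := fun x t => rinn (pds v x t) (Complex.I * pdt v x t)
      + rinn (v x t) (Complex.I * pst v x t) with hQ
  set P : ℝ → ℝ → ℝ := fun x t => rinn (v x t) (Complex.I * pdt v x t) with hP
  -- compact bound for Q
  obtain ⟨C, hC⟩ := ((isCompact_closedBall s 1).prod (isCompact_Icc (a := (0:ℝ)) (b := 1))).exists_bound_of_continuousOn (contQ h).continuousOn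
  have key := intervalIntegral.hasDerivAt_integral_of_dominated_loc_of_deriv_le
    (F := P) (F' := Q) (x₀ := s) (a := (0:ℝ)) (b := 1) (bound := fun _ => C)
    (μ := volume) (Metric.ball_mem_nhds s zero_lt_one)
    (Filter.Eventually.of_forall fun x =>
      (((contP h).comp (Continuous.prodMk_right x)).aestronglyMeasurable))
    (((contP h).comp (Continuous.prodMk_right s)).intervalIntegrable 0 1)
    (((contQ h).comp (Continuous.prodMk_right s)).aestronglyMeasurable)
    (Filter.Eventually.of_forall fun t ht x hx => by
      have hmem : (x, t) ∈ Metric.closedBall s 1 ×ˢ Set.Icc (0:ℝ) 1 := by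
        constructor
        · exact Metric.ball_subset_closedBall hx
        · rw [Set.uIoc_of_le zero_le_one] at ht
          exact ⟨le_of_lt ht.1, ht.2⟩
      exact hC (x, t) hmem)
    (intervalIntegrable_const)
    (Filter.Eventually.of_forall fun t ht x hx => by
      have h1 : HasDerivAt (fun y => v y t) (pds v x t) x := hds h x t
      have h2 : HasDerivAt (fun y => Complex.I * pdt v y t) (Complex.I * pst v x t) x :=
        (hasDerivAt_s_pdt h x t).const_mul Complex.I
      have := h1.rinn h2
      convert this using 1
      all_goals (unfold _root_.rinn; ring))
  exact key.2

end gamma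
section step2
variable {v : ℝ → ℝ → ℂ} (h : ContDiff ℝ (⊤ : ℕ∞) (Function.uncurry v))
include h

theorem cont_in_t {f : ℝ × ℝ → ℝ} (hf : Continuous f) (s : ℝ) :
    Continuous fun t => f (s, t) := hf.comp (Continuous.prodMk_right s)

omit h in
theorem v_one_eq (hper : ∀ s t : ℝ, v s (t + 1) = v s t) (s : ℝ) : v s 1 = v s 0 := by
  have := hper s 0; rwa [zero_add] at this

omit h in
theorem pds_one_eq (hper : ∀ s t : ℝ, v s (t + 1) = v s t) (s : ℝ) :
    pds v s 1 = pds v s 0 := by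
  unfold pds
  congr 1
  funext σ
  exact v_one_eq hper σ

theorem ibp (hper : ∀ s t : ℝ, v s (t + 1) = v s t) (s : ℝ) :
    (∫ t in (0:ℝ)..1, rinn (v s t) (Complex.I * pst v s t))
      = ∫ t in (0:ℝ)..1, rinn (pds v s t) (Complex.I * pdt v s t) := by
  have contA : Continuous fun t => rinn (pdt v s t) (Complex.I * pds v s t) :=
    ((pdt_cont h).comp (Continuous.prodMk_right s)).rinn
      (continuous_const.mul ((pds_cont h).comp (Continuous.prodMk_right s)))
  have contB : Continuous fun t => rinn (v s t) (Complex.I * pst v s t) :=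
    ((cont_v h).comp (Continuous.prodMk_right s)).rinn
      (continuous_const.mul ((pst_cont h).comp (Continuous.prodMk_right s)))
  have hR : ∀ t : ℝ, HasDerivAt (fun τ => rinn (v s τ) (Complex.I * pds v s τ))
      (rinn (pdt v s t) (Complex.I * pds v s t)
        + rinn (v s t) (Complex.I * pst v s t)) t := fun t =>
    (hdt h s t).rinn ((hasDerivAt_t_pds h s t).const_mul Complex.I)
  have hsub : (∫ t in (0:ℝ)..1, (rinn (pdt v s t) (Complex.I * pds v s t)
        + rinn (v s t) (Complex.I * pst v s t)))
      = rinn (v s 1) (Complex.I * pds v s 1) - rinn (v s 0) (Complex.I * pds v s 0) :=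
    intervalIntegral.integral_eq_sub_of_hasDerivAt (fun t _ => hR t)
      ((contA.add contB).intervalIntegrable 0 1)
  rw [v_one_eq hper, pds_one_eq hper, sub_self] at hsub
  rw [intervalIntegral.integral_add (contA.intervalIntegrable 0 1)
    (contB.intervalIntegrable 0 1)] at hsub
  have hswap : (∫ t in (0:ℝ)..1, rinn (pdt v s t) (Complex.I * pds v s t))
      = - ∫ t in (0:ℝ)..1, rinn (pds v s t) (Complex.I * pdt v s t) := by
    rw [← intervalIntegral.integral_neg]
    apply intervalIntegral.integral_congr
    intro t _
    exact rinn_I_swap _ _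
  rw [hswap] at hsub
  linarith

theorem gam_deriv (hper : ∀ s t : ℝ, v s (t + 1) = v s t) (s : ℝ) :
    HasDerivAt (gam v)
      ((∫ t in (0:ℝ)..1, ‖pds v s t + Complex.I * pdt v s t‖ ^ 2)
        - (∫ t in (0:ℝ)..1, ‖pds v s t‖ ^ 2)
        - (∫ t in (0:ℝ)..1, ‖pdt v s t‖ ^ 2)) s := by
  have contA : Continuous fun t => rinn (pds v s t) (Complex.I * pdt v s t) :=
    ((pds_cont h).comp (Continuous.prodMk_right s)).rinn
      (continuous_const.mul ((pdt_cont h).comp (Continuous.prodMk_right s)))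
  have contB : Continuous fun t => rinn (v s t) (Complex.I * pst v s t) :=
    ((cont_v h).comp (Continuous.prodMk_right s)).rinn
      (continuous_const.mul ((pst_cont h).comp (Continuous.prodMk_right s)))
  have key := gam_hasDeriv h s
  have hsplit : (∫ t in (0:ℝ)..1, (rinn (pds v s t) (Complex.I * pdt v s t)
        + rinn (v s t) (Complex.I * pst v s t)))
      = (∫ t in (0:ℝ)..1, rinn (pds v s t) (Complex.I * pdt v s t))
        + ∫ t in (0:ℝ)..1, rinn (v s t) (Complex.I * pst v s t) :=
    intervalIntegral.integral_add (contA.intervalIntegrable 0 1)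
      (contB.intervalIntegrable 0 1)
  rw [hsplit, ibp h hper s] at key
  have h2 : (∫ t in (0:ℝ)..1, rinn (pds v s t) (Complex.I * pdt v s t))
        + (∫ t in (0:ℝ)..1, rinn (pds v s t) (Complex.I * pdt v s t))
      = (∫ t in (0:ℝ)..1, ‖pds v s t + Complex.I * pdt v s t‖ ^ 2)
        - (∫ t in (0:ℝ)..1, ‖pds v s t‖ ^ 2)
        - (∫ t in (0:ℝ)..1, ‖pdt v s t‖ ^ 2) := by
    have contg : Continuous fun t => ‖pds v s t + Complex.I * pdt v s t‖ ^ 2 :=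
      (((pds_cont h).comp (Continuous.prodMk_right s)).add
        (continuous_const.mul ((pdt_cont h).comp (Continuous.prodMk_right s)))).norm.pow 2
    have conts : Continuous fun t => ‖pds v s t‖ ^ 2 :=
      ((pds_cont h).comp (Continuous.prodMk_right s)).norm.pow 2
    have contt : Continuous fun t => ‖pdt v s t‖ ^ 2 :=
      ((pdt_cont h).comp (Continuous.prodMk_right s)).norm.pow 2
    have hpt : (∫ t in (0:ℝ)..1, (2 * rinn (pds v s t) (Complex.I * pdt v s t)))
        = ∫ t in (0:ℝ)..1, (‖pds v s t + Complex.I * pdt v s t‖ ^ 2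
            - ‖pds v s t‖ ^ 2 - ‖pdt v s t‖ ^ 2) := by
      apply intervalIntegral.integral_congr
      intro t _
      simp only [norm_add_I_sq]
      ring
    rw [intervalIntegral.integral_const_mul] at hpt
    have e1 : (∫ t in (0:ℝ)..1, (‖pds v s t + Complex.I * pdt v s t‖ ^ 2
          - ‖pds v s t‖ ^ 2 - ‖pdt v s t‖ ^ 2))
        = (∫ t in (0:ℝ)..1, ‖pds v s t + Complex.I * pdt v s t‖ ^ 2)
          - (∫ t in (0:ℝ)..1, ‖pds v s t‖ ^ 2)
          - ∫ t in (0:ℝ)..1, ‖pdt v s t‖ ^ 2 := by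
      rw [intervalIntegral.integral_sub (f := fun t => ‖pds v s t + Complex.I * pdt v s t‖ ^ 2
            - ‖pds v s t‖ ^ 2) ((contg.sub conts).intervalIntegrable 0 1)
          (contt.intervalIntegrable 0 1),
        intervalIntegral.integral_sub (contg.intervalIntegrable 0 1)
          (conts.intervalIntegrable 0 1)]
    rw [e1] at hpt
    linarith
  rw [h2] at key
  exact key

end step2
section poincare
variable {v : ℝ → ℝ → ℂ} (h : ContDiff ℝ (⊤ : ℕ∞) (Function.uncurry v))
include h

theorem poincare_complex (s : ℝ) (hm : (∫ t in (0:ℝ)..1, v s t) = 0) :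
    (∫ t in (0:ℝ)..1, ‖v s t‖ ^ 2) ≤ ∫ t in (0:ℝ)..1, ‖pdt v s t‖ ^ 2 := by
  have contv : Continuous fun t => v s t := (cont_v h).comp (Continuous.prodMk_right s)
  have contvt : Continuous fun t => pdt v s t := (pdt_cont h).comp (Continuous.prodMk_right s)
  have hmean_re : (∫ t in (0:ℝ)..1, (v s t).re) = 0 := by
    have := Complex.reCLM.intervalIntegral_comp_comm (μ := volume) (contv.intervalIntegrable 0 1)
    simp only [Complex.reCLM_apply] at this
    rw [this, hm]; simp
  have hmean_im : (∫ t in (0:ℝ)..1, (v s t).im) = 0 := by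
    have := Complex.imCLM.intervalIntegral_comp_comm (μ := volume) (contv.intervalIntegrable 0 1)
    simp only [Complex.imCLM_apply] at this
    rw [this, hm]; simp
  have hre := poincare_real (u := fun t => (v s t).re) (u' := fun t => (pdt v s t).re)
    (fun t => (hdt h s t).cre) (Complex.continuous_re.comp contvt) hmean_re
  have him := poincare_real (u := fun t => (v s t).im) (u' := fun t => (pdt v s t).im)
    (fun t => (hdt h s t).cim) (Complex.continuous_im.comp contvt) hmean_im
  have i1 : IntervalIntegrable (fun t => ((v s t).re) ^ 2) volume 0 1 :=
    ((Complex.continuous_re.comp contv).pow 2).intervalIntegrable 0 1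
  have i2 : IntervalIntegrable (fun t => ((v s t).im) ^ 2) volume 0 1 :=
    ((Complex.continuous_im.comp contv).pow 2).intervalIntegrable 0 1
  have i3 : IntervalIntegrable (fun t => ((pdt v s t).re) ^ 2) volume 0 1 :=
    ((Complex.continuous_re.comp contvt).pow 2).intervalIntegrable 0 1
  have i4 : IntervalIntegrable (fun t => ((pdt v s t).im) ^ 2) volume 0 1 :=
    ((Complex.continuous_im.comp contvt).pow 2).intervalIntegrable 0 1
  have e1 : (∫ t in (0:ℝ)..1, ‖v s t‖ ^ 2)
      = (∫ t in (0:ℝ)..1, ((v s t).re) ^ 2) + ∫ t in (0:ℝ)..1, ((v s t).im) ^ 2 := by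
    rw [← intervalIntegral.integral_add i1 i2]
    apply intervalIntegral.integral_congr
    intro t _
    exact norm_sq_complex _
  have e2 : (∫ t in (0:ℝ)..1, ‖pdt v s t‖ ^ 2)
      = (∫ t in (0:ℝ)..1, ((pdt v s t).re) ^ 2) + ∫ t in (0:ℝ)..1, ((pdt v s t).im) ^ 2 := by
    rw [← intervalIntegral.integral_add i3 i4]
    apply intervalIntegral.integral_congr
    intro t _
    exact norm_sq_complex _
  rw [e1, e2]
  exact add_le_add hre him

end poincare
noncomputable def ViF (v : ℝ → ℝ → ℂ) (s : ℝ) : ℝ := ∫ t in (0:ℝ)..1, ‖v s t‖ ^ 2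
noncomputable def GiF (v : ℝ → ℝ → ℂ) (s : ℝ) : ℝ :=
  ∫ t in (0:ℝ)..1, ‖pds v s t + Complex.I * pdt v s t‖ ^ 2
noncomputable def AiF (v : ℝ → ℝ → ℂ) (s : ℝ) : ℝ := ∫ t in (0:ℝ)..1, ‖pds v s t‖ ^ 2
noncomputable def WiF (v : ℝ → ℝ → ℂ) (s : ℝ) : ℝ := ∫ t in (0:ℝ)..1, ‖pdt v s t‖ ^ 2

/-- The unweighted `L²` estimate from the first step of the proof of the
Hofer–Wysocki–Zehnder decay lemma: if `v` is smooth, bounded, 1-periodic in `t`,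
has vanishing mean values, `v_t → 0` uniformly in `t` as `s → ∞`, and
`g = v_s + i v_t` satisfies `∫_{s₀}^∞ ‖g(s)‖² ds < ∞`, then `s ↦ ‖v(s)‖` is
square-integrable on `[s₀,∞)` and
`∫_{s₀}^∞ ‖v(s)‖² ds ≤ ∫_{s₀}^∞ ‖g(s)‖² ds + (v(s₀), i v_t(s₀))_{L²}`. -/
theorem hwz_unweighted_L2_estimate
    (s₀ : ℝ) (v : ℝ → ℝ → ℂ)
    (hsmooth : ContDiff ℝ (⊤ : ℕ∞) (Function.uncurry v))
    (hbounded : ∃ M : ℝ, ∀ s t : ℝ, s₀ ≤ s → ‖v s t‖ ≤ M)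
    (hper : ∀ s t : ℝ, v s (t + 1) = v s t)
    (hmean : ∀ s : ℝ, s₀ ≤ s → (∫ t in (0:ℝ)..1, v s t) = 0)
    (hvt : ∀ ε : ℝ, 0 < ε → ∃ S : ℝ, ∀ s t : ℝ, S ≤ s → ‖pdt v s t‖ ≤ ε)
    (hgint : IntegrableOn
      (fun s => (l2norm (fun t => pds v s t + Complex.I * pdt v s t)) ^ 2) (Set.Ici s₀)) :
    IntegrableOn (fun s => (l2norm (v s)) ^ 2) (Set.Ici s₀) ∧
    (∫ s in Set.Ici s₀, (l2norm (v s)) ^ 2) ≤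
      (∫ s in Set.Ici s₀, (l2norm (fun t => pds v s t + Complex.I * pdt v s t)) ^ 2)
        + l2inner (v s₀) (fun t => Complex.I * pdt v s₀ t) := by
  obtain ⟨M, hM⟩ := hbounded
  have hM0 : 0 ≤ M := le_trans (norm_nonneg _) (hM s₀ 0 le_rfl)
  -- rewrite l2norm squares
  have hVeq : (fun s => (l2norm (v s)) ^ 2) = ViF v := by
    funext s
    exact Real.sq_sqrt (intervalIntegral.integral_nonneg zero_le_one fun t _ => sq_nonneg _)
  have hGeq : (fun s => (l2norm (fun t => pds v s t + Complex.I * pdt v s t)) ^ 2) = GiF v := by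
    funext s
    exact Real.sq_sqrt (intervalIntegral.integral_nonneg zero_le_one fun t _ => sq_nonneg _)
  rw [hGeq] at hgint
  rw [hVeq, hGeq]
  have hGint : IntegrableOn (GiF v) (Set.Ici s₀) := hgint
  -- continuity
  have contVi : Continuous (ViF v) := cont_param ((cont_v hsmooth).norm.pow 2)
  have contGi : Continuous (GiF v) := cont_param
    (((pds_cont hsmooth).add (continuous_const.mul (pdt_cont hsmooth))).norm.pow 2)
  have contAi : Continuous (AiF v) := cont_param ((pds_cont hsmooth).norm.pow 2)
  have contWi : Continuous (WiF v) := cont_param ((pdt_cont hsmooth).norm.pow 2)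
  -- nonnegativity
  have hVnn : ∀ s, 0 ≤ ViF v s :=
    fun s => intervalIntegral.integral_nonneg zero_le_one fun t _ => sq_nonneg _
  have hGnn : ∀ s, 0 ≤ GiF v s :=
    fun s => intervalIntegral.integral_nonneg zero_le_one fun t _ => sq_nonneg _
  have hAnn : ∀ s, 0 ≤ AiF v s :=
    fun s => intervalIntegral.integral_nonneg zero_le_one fun t _ => sq_nonneg _
  have hWnn : ∀ s, 0 ≤ WiF v s :=
    fun s => intervalIntegral.integral_nonneg zero_le_one fun t _ => sq_nonneg _
  -- derivative of γ
  have hγd : ∀ s, HasDerivAt (gam v) (GiF v s - AiF v s - WiF v s) s :=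
    fun s => gam_deriv hsmooth hper s
  have contD : Continuous fun s => GiF v s - AiF v s - WiF v s :=
    (contGi.sub contAi).sub contWi
  -- FTC
  have hftc : ∀ S : ℝ, (∫ s in s₀..S, (GiF v s - AiF v s - WiF v s)) = gam v S - gam v s₀ :=
    fun S => intervalIntegral.integral_eq_sub_of_hasDerivAt (fun s _ => hγd s)
      (contD.intervalIntegrable _ _)
  -- Poincaré
  have hpoin : ∀ s, s₀ ≤ s → ViF v s ≤ WiF v s :=
    fun s hs => poincare_complex hsmooth s (hmean s hs)
  -- key interval estimate
  have hkey : ∀ S, s₀ ≤ S →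
      (∫ s in s₀..S, ViF v s) ≤ (∫ s in s₀..S, GiF v s) + gam v s₀ - gam v S := by
    intro S hS
    have h1 : (∫ s in s₀..S, ViF v s)
        ≤ ∫ s in s₀..S, (GiF v s - (GiF v s - AiF v s - WiF v s)) := by
      apply intervalIntegral.integral_mono_on hS (contVi.intervalIntegrable _ _)
        ((contGi.sub contD).intervalIntegrable _ _)
      intro s hs
      have := hpoin s hs.1
      have := hAnn s
      show ViF v s ≤ GiF v s - (GiF v s - AiF v s - WiF v s)
      linarith
    have h2 : (∫ s in s₀..S, (GiF v s - (GiF v s - AiF v s - WiF v s)))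
        = (∫ s in s₀..S, GiF v s) - ∫ s in s₀..S, (GiF v s - AiF v s - WiF v s) :=
      intervalIntegral.integral_sub (contGi.intervalIntegrable _ _)
        (contD.intervalIntegrable _ _)
    rw [h2, hftc S] at h1
    linarith
  -- interval integral of Gi bounded by improper integral
  have hGle : ∀ S, s₀ ≤ S → (∫ s in s₀..S, GiF v s) ≤ ∫ s in Set.Ici s₀, GiF v s := by
    intro S hS
    rw [intervalIntegral.integral_of_le hS]
    exact setIntegral_mono_set hGint
      (Filter.Eventually.of_forall fun s => hGnn s)
      ((Set.Ioc_subset_Ioi_self.trans Set.Ioi_subset_Ici_self).eventuallyLE)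
  -- gamma bound
  have hγbnd : ∀ ε : ℝ, 0 < ε → ∀ s, s₀ ≤ s → (∀ t, ‖pdt v s t‖ ≤ ε) →
      |gam v s| ≤ M * ε := by
    intro ε hε s hs hb
    have key : ‖∫ t in (0:ℝ)..1, rinn (v s t) (Complex.I * pdt v s t)‖ ≤ (M * ε) * |1 - (0:ℝ)| := by
      apply intervalIntegral.norm_integral_le_of_norm_le_const
      intro t _
      rw [Real.norm_eq_abs]
      calc |rinn (v s t) (Complex.I * pdt v s t)|
          ≤ ‖v s t‖ * ‖Complex.I * pdt v s t‖ := abs_rinn_le _ _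
        _ ≤ M * ε := by
            apply mul_le_mul (hM s t hs) ?_ (norm_nonneg _) hM0
            rw [norm_mul, Complex.norm_I, one_mul]
            exact hb t
    rw [Real.norm_eq_abs] at key
    simpa [gam] using key
  obtain ⟨S₁, hS₁⟩ := hvt 1 one_pos
  have hγlow : ∀ s, s₀ ≤ s → S₁ ≤ s → -(M * 1) ≤ gam v s := by
    intro s h1 h2
    have := (abs_le.mp (hγbnd 1 one_pos s h1 (fun t => hS₁ s t h2))).1
    linarith
  -- uniform bound on the partial integrals
  have hΦ : ∀ S, s₀ ≤ S →
      (∫ s in s₀..S, ViF v s) ≤ (∫ s in Set.Ici s₀, GiF v s) + gam v s₀ + M * 1 := by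
    intro S hS
    set S' := max S (max s₀ S₁) with hS'
    have hSS' : S ≤ S' := le_max_left _ _
    have hs₀S' : s₀ ≤ S' := le_trans hS hSS'
    have hS₁S' : S₁ ≤ S' := le_trans (le_max_right s₀ S₁) (le_max_right _ _)
    have m1 : (∫ s in s₀..S, ViF v s) ≤ ∫ s in s₀..S', ViF v s :=
      intervalIntegral.integral_mono_interval le_rfl hS hSS'
        (Filter.Eventually.of_forall fun s => hVnn s) (contVi.intervalIntegrable _ _)
    have m2 := hkey S' hs₀S'
    have m3 := hGle S' hs₀S'
    have m4 := hγlow S' hs₀S' hS₁S'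
    linarith
  -- integrability of Vi
  have hb : Filter.Tendsto (fun n : ℕ => s₀ + (n : ℝ)) Filter.atTop Filter.atTop :=
    Filter.tendsto_atTop_add_const_left _ _ tendsto_natCast_atTop_atTop
  have hViIoi : IntegrableOn (ViF v) (Set.Ioi s₀) := by
    apply integrableOn_Ioi_of_intervalIntegral_norm_bounded
      ((∫ s in Set.Ici s₀, GiF v s) + gam v s₀ + M * 1) s₀
      (fun n : ℕ => contVi.integrableOn_Ioc) hb
    filter_upwards with n
    have he : (∫ s in s₀..(s₀ + (n:ℝ)), ‖ViF v s‖) = ∫ s in s₀..(s₀ + (n:ℝ)), ViF v s := by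
      apply intervalIntegral.integral_congr
      intro s _
      exact Real.norm_of_nonneg (hVnn s)
    rw [he]
    exact hΦ _ (le_add_of_nonneg_right n.cast_nonneg)
  have hViIci : IntegrableOn (ViF v) (Set.Ici s₀) := by
    rwa [integrableOn_Ici_iff_integrableOn_Ioi]
  refine ⟨hViIci, ?_⟩
  -- limits
  have tΦ : Filter.Tendsto (fun n : ℕ => ∫ s in s₀..(s₀ + (n:ℝ)), ViF v s)
      Filter.atTop (nhds (∫ s in Set.Ioi s₀, ViF v s)) :=
    intervalIntegral_tendsto_integral_Ioi s₀ hViIoi hb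
  have hGIoi : IntegrableOn (GiF v) (Set.Ioi s₀) := hGint.mono_set Set.Ioi_subset_Ici_self
  have tG : Filter.Tendsto (fun n : ℕ => ∫ s in s₀..(s₀ + (n:ℝ)), GiF v s)
      Filter.atTop (nhds (∫ s in Set.Ioi s₀, GiF v s)) :=
    intervalIntegral_tendsto_integral_Ioi s₀ hGIoi hb
  have tγ0 : Filter.Tendsto (gam v) Filter.atTop (nhds 0) := by
    rw [Metric.tendsto_atTop]
    intro ε hε
    obtain ⟨S₂, hS₂⟩ := hvt (ε / (M + 1)) (by positivity)
    refine ⟨max s₀ S₂, fun s hs => ?_⟩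
    have h1 : |gam v s| ≤ M * (ε / (M + 1)) :=
      hγbnd _ (by positivity) s (le_trans (le_max_left _ _) hs)
        (fun t => hS₂ s t (le_trans (le_max_right _ _) hs))
    have h2 : M * (ε / (M + 1)) < ε := by
      rw [mul_div_assoc']
      rw [div_lt_iff₀ (by positivity)]
      nlinarith
    rw [Real.dist_eq, sub_zero]
    exact lt_of_le_of_lt h1 h2
  have tγ : Filter.Tendsto (fun n : ℕ => gam v (s₀ + (n:ℝ))) Filter.atTop (nhds 0) :=
    tγ0.comp hb
  have tRHS : Filter.Tendsto
      (fun n : ℕ => (∫ s in s₀..(s₀ + (n:ℝ)), GiF v s) + gam v s₀ - gam v (s₀ + (n:ℝ)))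
      Filter.atTop (nhds ((∫ s in Set.Ioi s₀, GiF v s) + gam v s₀ - 0)) :=
    (tG.add tendsto_const_nhds).sub tγ
  have hle := le_of_tendsto_of_tendsto' tΦ tRHS
    (fun n => hkey _ (le_add_of_nonneg_right n.cast_nonneg))
  rw [sub_zero] at hle
  have e1 : (∫ s in Set.Ici s₀, ViF v s) = ∫ s in Set.Ioi s₀, ViF v s :=
    integral_Ici_eq_integral_Ioi
  have e2 : (∫ s in Set.Ici s₀, GiF v s) = ∫ s in Set.Ioi s₀, GiF v s :=
    integral_Ici_eq_integral_Ioi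
  have e3 : l2inner (v s₀) (fun t => Complex.I * pdt v s₀ t) = gam v s₀ := rfl
  rw [e1, e2, e3]
  exact hle
end

section
/- Let s₁ < s₂ and let v : [s₁, s₂] × ℝ → ℂ be a smooth map with v(s, t+1) = v(s, t) for all (s,t) and with ∫₀¹ v(s,t) dt = 0 for every s ∈ [s₁, s₂]. Set g := ∂ₛv + i·∂ₜv. Then ∫_{s₁}^{s₂} ‖v(s,·)‖_{L²}² ds ≤ ∫_{s₁}^{s₂} ‖g(s,·)‖_{L²}² ds + |⟨v(s₁,·), i·∂ₜv(s₁,·)⟩_{L²}| + |⟨v(s₂,·), i·∂ₜv(s₂,·)⟩_{L²}|. -/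
open MeasureTheory intervalIntegral Set

namespace HWZAux

def inne (a b : ℂ) : ℝ := a.re * b.re + a.im * b.im

lemma inne_I_antisymm (a b : ℂ) : inne b (Complex.I * a) = - inne a (Complex.I * b) := by
  simp [inne, Complex.mul_re, Complex.mul_im]; ring

lemma norm_sq_eq (z : ℂ) : ‖z‖ ^ 2 = z.re ^ 2 + z.im ^ 2 := by
  rw [← Complex.normSq_eq_norm_sq, Complex.normSq_apply]; ring

lemma norm_add_I_sq (a b : ℂ) :
    ‖a + Complex.I * b‖ ^ 2 = ‖a‖ ^ 2 + ‖b‖ ^ 2 + 2 * inne a (Complex.I * b) := by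
  simp only [norm_sq_eq, inne, Complex.add_re, Complex.add_im, Complex.mul_re, Complex.mul_im,
    Complex.I_re, Complex.I_im]
  ring

lemma continuous_inne {X : Type*} [TopologicalSpace X] {a b : X → ℂ}
    (ha : Continuous a) (hb : Continuous b) :
    Continuous fun x => inne (a x) (b x) := by
  unfold inne; fun_prop

lemma hasDerivAt_inne {a b : ℝ → ℂ} {a' b' : ℂ} {x : ℝ}
    (ha : HasDerivAt a a' x) (hb : HasDerivAt b b' x) :
    HasDerivAt (fun y => inne (a y) (b y)) (inne a' (b x) + inne (a x) b') x := by
  have hare : HasDerivAt (fun y => (a y).re) a'.re x :=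
    Complex.reCLM.hasFDerivAt.comp_hasDerivAt x ha
  have haim : HasDerivAt (fun y => (a y).im) a'.im x :=
    Complex.imCLM.hasFDerivAt.comp_hasDerivAt x ha
  have hbre : HasDerivAt (fun y => (b y).re) b'.re x :=
    Complex.reCLM.hasFDerivAt.comp_hasDerivAt x hb
  have hbim : HasDerivAt (fun y => (b y).im) b'.im x :=
    Complex.imCLM.hasFDerivAt.comp_hasDerivAt x hb
  have h := (hare.mul hbre).add (haim.mul hbim)
  have e : a'.re * (b x).re + (a x).re * b'.re + (a'.im * (b x).im + (a x).im * b'.im)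
      = inne a' (b x) + inne (a x) b' := by simp [inne]; ring
  rw [← e]
  have h' : HasDerivAt (fun y => (a y).re * (b y).re + (a y).im * (b y).im)
      (a'.re * (b x).re + (a x).re * b'.re + (a'.im * (b x).im + (a x).im * b'.im)) x := h
  simpa [inne] using h'



lemma integral_pos_of_ne_zero {g : ℝ → ℝ} (hc : Continuous g)
    (hne : ∀ c ∈ Icc (0:ℝ) 1, g c ≠ 0) (h0 : 0 < g 0) :
    0 < ∫ t in (0:ℝ)..1, g t := by
  have hpos : ∀ t ∈ Icc (0:ℝ) 1, 0 < g t := by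
    intro t ht
    rcases (hne t ht).lt_or_gt with hlt | hlt
    · exfalso
      have hsub : uIcc (0:ℝ) t ⊆ Icc 0 1 := by
        rw [uIcc_of_le ht.1]
        exact Icc_subset_Icc le_rfl ht.2
      have : (0:ℝ) ∈ uIcc (g 0) (g t) := by
        rw [Set.mem_uIcc]
        right; exact ⟨hlt.le, h0.le⟩
      obtain ⟨c, hc1, hc2⟩ := intermediate_value_uIcc (hc.continuousOn (s := uIcc 0 t)) this
      exact hne c (hsub hc1) hc2
    · exact hlt
  apply intervalIntegral_pos_of_pos_on (hc.intervalIntegrable _ _)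
    (fun x hx => hpos x ⟨hx.1.le, hx.2.le⟩) one_pos

lemma exists_zero {g : ℝ → ℝ} (hc : Continuous g)
    (hmean : (∫ t in (0:ℝ)..1, g t) = 0) :
    ∃ c ∈ Icc (0:ℝ) 1, g c = 0 := by
  by_contra h
  push_neg at h
  have h0 : g 0 ≠ 0 := h 0 ⟨le_rfl, zero_le_one⟩
  rcases h0.lt_or_gt with hlt | hlt
  · have := integral_pos_of_ne_zero (g := fun t => -g t) (by fun_prop)
      (fun c hc => neg_ne_zero.mpr (h c hc)) (by simpa using hlt)
    rw [intervalIntegral.integral_neg, hmean] at this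
    simp at this
  · have := integral_pos_of_ne_zero hc h hlt
    rw [hmean] at this
    exact lt_irrefl _ this

lemma poincare_real {g g' : ℝ → ℝ} (hd : ∀ t, HasDerivAt g (g' t) t)
    (hc' : Continuous g') (hper : ∀ t, g (t + 1) = g t)
    (hmean : (∫ t in (0:ℝ)..1, g t) = 0) :
    ∫ t in (0:ℝ)..1, g t ^ 2 ≤ ∫ t in (0:ℝ)..1, g' t ^ 2 := by
  have hc : Continuous g := by
    rw [continuous_iff_continuousAt]; exact fun t => (hd t).continuousAt
  obtain ⟨c, hc01, hgc⟩ := exists_zero hc hmean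
  set M := ∫ t in (0:ℝ)..1, |g' t| with hM_def
  have hM0 : 0 ≤ M := intervalIntegral.integral_nonneg zero_le_one (fun u _ => abs_nonneg _)
  have hbd : ∀ t ∈ Icc (0:ℝ) 1, |g t| ≤ M := by
    intro t ht
    have hftc : (∫ u in c..t, g' u) = g t - g c :=
      integral_eq_sub_of_hasDerivAt (fun x _ => hd x) (hc'.intervalIntegrable _ _)
    have h1 : |g t| = |∫ u in c..t, g' u| := by rw [hftc, hgc, sub_zero]
    rw [h1]
    calc |∫ u in c..t, g' u| ≤ |(∫ u in c..t, |g' u|)| := by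
          simpa [Real.norm_eq_abs] using
            intervalIntegral.norm_integral_le_abs_integral_norm (f := g') (a := c) (b := t)
      _ ≤ |(∫ u in (0:ℝ)..1, |g' u|)| := by
          apply intervalIntegral.abs_integral_mono_interval
          · rw [uIoc_of_le (zero_le_one : (0:ℝ) ≤ 1)]
            intro x hx
            rcases Set.mem_uIoc.mp hx with h' | h'
            · exact ⟨lt_of_le_of_lt hc01.1 h'.1, h'.2.trans ht.2⟩
            · exact ⟨lt_of_le_of_lt ht.1 h'.1, h'.2.trans hc01.2⟩
          · exact Filter.Eventually.of_forall fun x => abs_nonneg _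
          · exact (hc'.abs).intervalIntegrable _ _
      _ = M := abs_of_nonneg hM0
  have h1 : (∫ t in (0:ℝ)..1, g t ^ 2) ≤ ∫ t in (0:ℝ)..1, M ^ 2 := by
    apply intervalIntegral.integral_mono_on zero_le_one
      ((hc.pow 2).intervalIntegrable _ _) (intervalIntegrable_const)
    intro x hx
    have := hbd x hx
    show g x ^ 2 ≤ M ^ 2
    nlinarith [abs_nonneg (g x), sq_abs (g x)]
  have h2 : (∫ t in (0:ℝ)..1, M ^ 2) = M ^ 2 := by simp
  have h3 : M ^ 2 ≤ ∫ t in (0:ℝ)..1, g' t ^ 2 := by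
    have hnn : 0 ≤ ∫ t in (0:ℝ)..1, (|g' t| - M) ^ 2 :=
      intervalIntegral.integral_nonneg zero_le_one (fun u _ => sq_nonneg _)
    have hexp : (∫ t in (0:ℝ)..1, (|g' t| - M) ^ 2)
        = (∫ t in (0:ℝ)..1, g' t ^ 2) - 2 * M * M + M ^ 2 := by
      have e : ∀ t, (|g' t| - M) ^ 2 = g' t ^ 2 - (2 * M) * |g' t| + M ^ 2 := by
        intro t; rw [sub_sq]; rw [sq_abs]; ring
      simp_rw [e]
      have hg2 : IntervalIntegrable (fun t => g' t ^ 2) volume 0 1 := (hc'.pow 2).intervalIntegrable _ _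
      rw [intervalIntegral.integral_add (hg2.sub
          (((hc'.abs).intervalIntegrable _ _).const_mul _)) intervalIntegrable_const,
        intervalIntegral.integral_sub hg2
          (((hc'.abs).intervalIntegrable _ _).const_mul _),
        intervalIntegral.integral_const_mul]
      simp [← hM_def]
    rw [hexp] at hnn
    nlinarith
  linarith [h1, h2.le, h3]

end HWZAux


namespace HWZAux2

lemma poincare_complex {f : ℝ → ℂ} {f' : ℝ → ℂ} (hd : ∀ t, HasDerivAt f (f' t) t)
    (hc' : Continuous f') (hper : ∀ t, f (t + 1) = f t)
    (hmean : (∫ t in (0:ℝ)..1, f t) = 0) :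
    (∫ t in (0:ℝ)..1, ‖f t‖ ^ 2) ≤ ∫ t in (0:ℝ)..1, ‖f' t‖ ^ 2 := by
  have hc : Continuous f := by
    rw [continuous_iff_continuousAt]; exact fun t => (hd t).continuousAt
  have hdre : ∀ t, HasDerivAt (fun t => (f t).re) ((f' t).re) t :=
    fun t => Complex.reCLM.hasFDerivAt.comp_hasDerivAt t (hd t)
  have hdim : ∀ t, HasDerivAt (fun t => (f t).im) ((f' t).im) t :=
    fun t => Complex.imCLM.hasFDerivAt.comp_hasDerivAt t (hd t)
  have hmre : (∫ t in (0:ℝ)..1, (f t).re) = 0 := by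
    have := Complex.reCLM.intervalIntegral_comp_comm (hc.intervalIntegrable (μ := volume) (0:ℝ) 1)
    simp only [hmean] at this
    simpa using this
  have hmim : (∫ t in (0:ℝ)..1, (f t).im) = 0 := by
    have := Complex.imCLM.intervalIntegral_comp_comm (hc.intervalIntegrable (μ := volume) (0:ℝ) 1)
    simp only [hmean] at this
    simpa using this
  have hre := HWZAux.poincare_real hdre (Complex.continuous_re.comp hc')
    (fun t => by rw [hper]) hmre
  have him := HWZAux.poincare_real hdim (Complex.continuous_im.comp hc')
    (fun t => by rw [hper]) hmim
  have e1 : (∫ t in (0:ℝ)..1, ‖f t‖ ^ 2)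
      = (∫ t in (0:ℝ)..1, (f t).re ^ 2) + ∫ t in (0:ℝ)..1, (f t).im ^ 2 := by
    have h1 : IntervalIntegrable (fun t => (f t).re ^ 2) volume 0 1 := by
      apply Continuous.intervalIntegrable; fun_prop
    have h2 : IntervalIntegrable (fun t => (f t).im ^ 2) volume 0 1 := by
      apply Continuous.intervalIntegrable; fun_prop
    rw [← intervalIntegral.integral_add h1 h2]
    simp_rw [HWZAux.norm_sq_eq]
  have e2 : (∫ t in (0:ℝ)..1, ‖f' t‖ ^ 2)
      = (∫ t in (0:ℝ)..1, (f' t).re ^ 2) + ∫ t in (0:ℝ)..1, (f' t).im ^ 2 := by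
    have h1 : IntervalIntegrable (fun t => (f' t).re ^ 2) volume 0 1 := by
      apply Continuous.intervalIntegrable; fun_prop
    have h2 : IntervalIntegrable (fun t => (f' t).im ^ 2) volume 0 1 := by
      apply Continuous.intervalIntegrable; fun_prop
    rw [← intervalIntegral.integral_add h1 h2]
    simp_rw [HWZAux.norm_sq_eq]
  rw [e1, e2]
  exact add_le_add hre him

end HWZAux2

/-- The basic integration-by-parts estimate from the proof of the finite-cylinder
decay lemma (Lemma 1.5.2): for `v` smooth, 1-periodic in `t`, with vanishing mean
values on `[s₁,s₂]`, and `g = v_s + i v_t`,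
`∫_{s₁}^{s₂} ‖v(s)‖² ds ≤ ∫_{s₁}^{s₂} ‖g(s)‖² ds
  + |(v(s₁), i v_t(s₁))_{L²}| + |(v(s₂), i v_t(s₂))_{L²}|`. -/
theorem hwz_ibp_estimate
    (s₁ s₂ : ℝ) (hs : s₁ < s₂) (v : ℝ → ℝ → ℂ)
    (hsmooth : ContDiff ℝ (⊤ : ℕ∞) (Function.uncurry v))
    (hper : ∀ s t : ℝ, v s (t + 1) = v s t)
    (hmean : ∀ s ∈ Set.Icc s₁ s₂, (∫ t in (0:ℝ)..1, v s t) = 0) :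
    (∫ s in s₁..s₂, (l2norm (v s)) ^ 2) ≤
      (∫ s in s₁..s₂, (l2norm (fun t => pds v s t + Complex.I * pdt v s t)) ^ 2)
        + |l2inner (v s₁) (fun t => Complex.I * pdt v s₁ t)|
        + |l2inner (v s₂) (fun t => Complex.I * pdt v s₂ t)| := by
  open HWZAux in
  have hs' : s₁ ≤ s₂ := hs.le
  set f := Function.uncurry v with hf_def
  have hf : ContDiff ℝ (⊤ : ℕ∞) f := hsmooth
  have hfc : Continuous f := hf.continuous
  set D := fderiv ℝ f with hD_def
  have hD : ContDiff ℝ (⊤ : ℕ∞) D := hf.fderiv_right (by simp)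
  have hDc : Continuous D := hD.continuous
  set E2 := fderiv ℝ D with hE_def
  have hE : ContDiff ℝ (⊤ : ℕ∞) E2 := hD.fderiv_right (by simp)
  have hEc : Continuous E2 := hE.continuous
  -- first partial derivatives
  have hvs : ∀ s t : ℝ, HasDerivAt (fun σ => v σ t) (D (s, t) (1, 0)) s := by
    intro s t
    have h1 : HasDerivAt (fun σ : ℝ => (σ, t)) ((1:ℝ), (0:ℝ)) s :=
      (hasDerivAt_id' _).prodMk (hasDerivAt_const s t)
    exact (hf.differentiable (by simp) (s, t)).hasFDerivAt.comp_hasDerivAt s h1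
  have hvt : ∀ s t : ℝ, HasDerivAt (fun τ => v s τ) (D (s, t) (0, 1)) t := by
    intro s t
    have h1 : HasDerivAt (fun τ : ℝ => (s, τ)) ((0:ℝ), (1:ℝ)) t :=
      (hasDerivAt_const t s).prodMk (hasDerivAt_id' _)
    exact (hf.differentiable (by simp) (s, t)).hasFDerivAt.comp_hasDerivAt t h1
  -- periodicity of D
  have hDper : ∀ s t : ℝ, D (s, t + 1) = D (s, t) := by
    have hT : ∀ p : ℝ × ℝ, f (p + ((0:ℝ), (1:ℝ))) = f p := by
      intro p
      show v (p.1 + 0) (p.2 + 1) = v p.1 p.2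
      rw [add_zero, hper]
    intro s t
    have h1 : HasFDerivAt (fun p : ℝ × ℝ => p + ((0:ℝ), (1:ℝ)))
        (ContinuousLinearMap.id ℝ (ℝ × ℝ)) (s, t) := (hasFDerivAt_id _).add_const _
    have h2 : HasFDerivAt f (D (s, t + 1)) ((s, t) + ((0:ℝ), (1:ℝ))) := by
      have h := (hf.differentiable (by simp) ((s, t + 1))).hasFDerivAt
      have : ((s, t) + ((0:ℝ), (1:ℝ))) = (s, t + 1) := by simp [Prod.ext_iff]
      rw [this]
      exact h
    have h3 := h2.comp (s, t) h1
    have h4 : (f ∘ fun p : ℝ × ℝ => p + ((0:ℝ), (1:ℝ))) = f := funext hT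
    rw [h4] at h3
    have h5 := (hf.differentiable (by simp) (s, t)).hasFDerivAt
    have h6 := h3.unique h5
    simpa using h6
  -- second partial derivatives
  have hPt : ∀ s t : ℝ, HasDerivAt (fun τ => D (s, τ) ((1:ℝ), (0:ℝ)))
      (E2 (s, t) (0, 1) (1, 0)) t := by
    intro s t
    have h1 : HasDerivAt (fun τ : ℝ => (s, τ)) ((0:ℝ), (1:ℝ)) t :=
      (hasDerivAt_const t s).prodMk (hasDerivAt_id' _)
    have h2 : HasDerivAt (fun τ => D (s, τ)) (E2 (s, t) (0, 1)) t :=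
      (hD.differentiable (by simp) (s, t)).hasFDerivAt.comp_hasDerivAt t h1
    have h3 := h2.clm_apply (hasDerivAt_const t ((1:ℝ), (0:ℝ)))
    simpa using h3
  have hQs : ∀ s t : ℝ, HasDerivAt (fun σ => D (σ, t) ((0:ℝ), (1:ℝ)))
      (E2 (s, t) (1, 0) (0, 1)) s := by
    intro s t
    have h1 : HasDerivAt (fun σ : ℝ => (σ, t)) ((1:ℝ), (0:ℝ)) s :=
      (hasDerivAt_id' _).prodMk (hasDerivAt_const s t)
    have h2 : HasDerivAt (fun σ => D (σ, t)) (E2 (s, t) (1, 0)) s :=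
      (hD.differentiable (by simp) (s, t)).hasFDerivAt.comp_hasDerivAt s h1
    have h3 := h2.clm_apply (hasDerivAt_const s ((0:ℝ), (1:ℝ)))
    simpa using h3
  -- Clairaut
  have hsymm : ∀ p : ℝ × ℝ, E2 p (0, 1) (1, 0) = E2 p (1, 0) (0, 1) := by
    intro p
    exact second_derivative_symmetric (f := f) (f' := D) (f'' := E2 p)
      (fun y => (hf.differentiable (by simp) y).hasFDerivAt)
      ((hD.differentiable (by simp) p).hasFDerivAt) _ _
  -- continuity facts
  have hcP : Continuous (fun p : ℝ × ℝ => D p ((1:ℝ), (0:ℝ))) :=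
    hDc.clm_apply continuous_const
  have hcQ : Continuous (fun p : ℝ × ℝ => D p ((0:ℝ), (1:ℝ))) :=
    hDc.clm_apply continuous_const
  have hcT : Continuous (fun p : ℝ × ℝ => E2 p ((1:ℝ), (0:ℝ)) ((0:ℝ), (1:ℝ))) :=
    (hEc.clm_apply continuous_const).clm_apply continuous_const
  have hcT' : Continuous (fun p : ℝ × ℝ => E2 p ((0:ℝ), (1:ℝ)) ((1:ℝ), (0:ℝ))) :=
    (hEc.clm_apply continuous_const).clm_apply continuous_const
  have hk : ∀ s : ℝ, Continuous (fun t : ℝ => ((s : ℝ), t)) :=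
    fun s => continuous_const.prodMk continuous_id
  have hk' : ∀ t : ℝ, Continuous (fun s : ℝ => ((s : ℝ), t)) :=
    fun t => continuous_id.prodMk continuous_const
  have hcvs : ∀ s : ℝ, Continuous (fun t => v s t) := fun s => hfc.comp (hk s)
  -- the cross-term integrand, uncurried
  set W : ℝ × ℝ → ℝ := fun p =>
    inne (D p (1, 0)) (Complex.I * D p (0, 1)) +
      inne (f p) (Complex.I * E2 p (1, 0) (0, 1)) with hW_def
  have hWc : Continuous W := by
    apply Continuous.add
    · exact HWZAux.continuous_inne hcP (continuous_const.mul hcQ)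
    · exact HWZAux.continuous_inne hfc (continuous_const.mul hcT)
  -- the s-derivative of ψ(σ) = inne (v σ t) (I * Q (σ,t)) is W
  have hψd : ∀ t s : ℝ, HasDerivAt (fun σ => inne (v σ t) (Complex.I * D (σ, t) (0, 1)))
      (W (s, t)) s := by
    intro t s
    exact HWZAux.hasDerivAt_inne (hvs s t) ((hQs s t).const_mul Complex.I)
  -- the t-derivative of φ(τ) = inne (v s τ) (I * P (s,τ))
  have hφd : ∀ s t : ℝ, HasDerivAt (fun τ => inne (v s τ) (Complex.I * D (s, τ) (1, 0)))
      (inne (D (s, t) (0, 1)) (Complex.I * D (s, t) (1, 0)) +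
        inne (v s t) (Complex.I * E2 (s, t) (0, 1) (1, 0))) t := by
    intro s t
    exact HWZAux.hasDerivAt_inne (hvt s t) ((hPt s t).const_mul Complex.I)
  -- per-slice continuity in t
  have hcA : ∀ s : ℝ, Continuous (fun t : ℝ =>
      inne (D (s, t) (1, 0)) (Complex.I * D (s, t) (0, 1))) := fun s =>
    HWZAux.continuous_inne (hcP.comp (hk s)) (continuous_const.mul (hcQ.comp (hk s)))
  have hcB : ∀ s : ℝ, Continuous (fun t : ℝ =>
      inne (v s t) (Complex.I * E2 (s, t) (1, 0) (0, 1))) := fun s =>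
    HWZAux.continuous_inne (hcvs s) (continuous_const.mul (hcT.comp (hk s)))
  have hcB' : ∀ s : ℝ, Continuous (fun t : ℝ =>
      inne (v s t) (Complex.I * E2 (s, t) (0, 1) (1, 0))) := fun s =>
    HWZAux.continuous_inne (hcvs s) (continuous_const.mul (hcT'.comp (hk s)))
  have hcC : ∀ s : ℝ, Continuous (fun t : ℝ =>
      inne (D (s, t) (0, 1)) (Complex.I * D (s, t) (1, 0))) := fun s =>
    HWZAux.continuous_inne (hcQ.comp (hk s)) (continuous_const.mul (hcP.comp (hk s)))
  -- integration by parts in t (uses periodicity + FTC)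
  have hIBP : ∀ s : ℝ,
      (∫ t in (0:ℝ)..1, inne (v s t) (Complex.I * E2 (s, t) (1, 0) (0, 1)))
        = ∫ t in (0:ℝ)..1, inne (D (s, t) (1, 0)) (Complex.I * D (s, t) (0, 1)) := by
    intro s
    have hFTC : (∫ t in (0:ℝ)..1,
        (inne (D (s, t) (0, 1)) (Complex.I * D (s, t) (1, 0)) +
          inne (v s t) (Complex.I * E2 (s, t) (0, 1) (1, 0))))
        = inne (v s 1) (Complex.I * D (s, 1) (1, 0))
          - inne (v s 0) (Complex.I * D (s, 0) (1, 0)) :=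
      integral_eq_sub_of_hasDerivAt (fun t _ => hφd s t)
        (((hcC s).add (hcB' s)).intervalIntegrable _ _)
    have hper1 : v s 1 = v s 0 := by
      have := hper s 0; rwa [zero_add] at this
    have hper2 : D (s, 1) (1, 0) = D (s, 0) (1, 0) := by
      have := hDper s 0; rw [zero_add] at this; rw [this]
    rw [hper1, hper2, sub_self] at hFTC
    have hpoint : ∀ t : ℝ,
        inne (D (s, t) (0, 1)) (Complex.I * D (s, t) (1, 0)) +
          inne (v s t) (Complex.I * E2 (s, t) (0, 1) (1, 0))
        = -inne (D (s, t) (1, 0)) (Complex.I * D (s, t) (0, 1)) +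
          inne (v s t) (Complex.I * E2 (s, t) (1, 0) (0, 1)) := by
      intro t
      rw [hsymm, HWZAux.inne_I_antisymm]
    rw [intervalIntegral.integral_congr (fun t _ => hpoint t)] at hFTC
    have hnegI : IntervalIntegrable
        (fun t => -inne (D (s, t) (1, 0)) (Complex.I * D (s, t) (0, 1))) volume 0 1 :=
      ((hcA s).neg).intervalIntegrable _ _
    rw [intervalIntegral.integral_add hnegI
      ((hcB s).intervalIntegrable _ _), intervalIntegral.integral_neg] at hFTC
    linarith
  -- per-s cross-term identity
  have h2X : ∀ s : ℝ, (∫ t in (0:ℝ)..1, W (s, t))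
      = 2 * ∫ t in (0:ℝ)..1, inne (D (s, t) (1, 0)) (Complex.I * D (s, t) (0, 1)) := by
    intro s
    have : (∫ t in (0:ℝ)..1, W (s, t))
        = (∫ t in (0:ℝ)..1, inne (D (s, t) (1, 0)) (Complex.I * D (s, t) (0, 1)))
          + ∫ t in (0:ℝ)..1, inne (v s t) (Complex.I * E2 (s, t) (1, 0) (0, 1)) :=
      intervalIntegral.integral_add ((hcA s).intervalIntegrable _ _)
        ((hcB s).intervalIntegrable _ _)
    rw [this, hIBP s]; ring
  -- Fubini for the cross term
  have hWint : Integrable W ((volume.restrict (Ioc s₁ s₂)).prod (volume.restrict (Ioc (0:ℝ) 1))) := by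
    rw [Measure.prod_restrict, ← Measure.volume_eq_prod]
    apply IntegrableOn.mono_set (t := Icc s₁ s₂ ×ˢ Icc (0:ℝ) 1)
    · exact hWc.continuousOn.integrableOn_compact (isCompact_Icc.prod isCompact_Icc)
    · exact Set.prod_mono Ioc_subset_Icc_self Ioc_subset_Icc_self
  have hfub : (∫ s in s₁..s₂, ∫ t in (0:ℝ)..1, W (s, t))
      = ∫ t in (0:ℝ)..1, ∫ s in s₁..s₂, W (s, t) := by
    simp_rw [intervalIntegral.integral_of_le hs', intervalIntegral.integral_of_le (zero_le_one' ℝ)]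
    exact MeasureTheory.integral_integral_swap hWint
  -- FTC in s for the cross term
  have hFTCs : ∀ t : ℝ, (∫ s in s₁..s₂, W (s, t))
      = inne (v s₂ t) (Complex.I * D (s₂, t) (0, 1))
        - inne (v s₁ t) (Complex.I * D (s₁, t) (0, 1)) := by
    intro t
    refine integral_eq_sub_of_hasDerivAt (fun σ _ => hψd t σ) ?_
    exact (hWc.comp (hk' t)).intervalIntegrable _ _
  have hcross : (∫ s in s₁..s₂, ∫ t in (0:ℝ)..1, W (s, t))
      = (∫ t in (0:ℝ)..1, inne (v s₂ t) (Complex.I * D (s₂, t) (0, 1)))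
        - ∫ t in (0:ℝ)..1, inne (v s₁ t) (Complex.I * D (s₁, t) (0, 1)) := by
    rw [hfub, intervalIntegral.integral_congr (fun t _ => hFTCs t)]
    exact intervalIntegral.integral_sub
      ((HWZAux.continuous_inne (hcvs s₂) (continuous_const.mul (hcQ.comp (hk s₂)))).intervalIntegrable _ _)
      ((HWZAux.continuous_inne (hcvs s₁) (continuous_const.mul (hcQ.comp (hk s₁)))).intervalIntegrable _ _)
  -- Poincaré inequality on each slice
  have hpoin : ∀ s ∈ Icc s₁ s₂, (∫ t in (0:ℝ)..1, ‖v s t‖ ^ 2)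
      ≤ ∫ t in (0:ℝ)..1, ‖D (s, t) (0, 1)‖ ^ 2 := by
    intro s hsmem
    exact HWZAux2.poincare_complex (f := fun t => v s t) (f' := fun t => D (s, t) (0, 1))
      (fun t => hvt s t) (hcQ.comp (hk s)) (hper s) (hmean s hsmem)
  -- continuity in s of the slice integrals
  have hNc : Continuous (fun s => ∫ t in (0:ℝ)..1, ‖v s t‖ ^ 2) := by
    apply intervalIntegral.continuous_parametric_intervalIntegral_of_continuous'
    exact hfc.norm.pow 2
  have hSc : Continuous (fun s => ∫ t in (0:ℝ)..1, ‖D (s, t) (1, 0)‖ ^ 2) := by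
    apply intervalIntegral.continuous_parametric_intervalIntegral_of_continuous'
    exact hcP.norm.pow 2
  have hTc : Continuous (fun s => ∫ t in (0:ℝ)..1, ‖D (s, t) (0, 1)‖ ^ 2) := by
    apply intervalIntegral.continuous_parametric_intervalIntegral_of_continuous'
    exact hcQ.norm.pow 2
  have hXWc : Continuous (fun s => ∫ t in (0:ℝ)..1, W (s, t)) := by
    apply intervalIntegral.continuous_parametric_intervalIntegral_of_continuous'
    exact hWc
  -- expansion of the norm of g
  have hGexp : ∀ s : ℝ, (∫ t in (0:ℝ)..1, ‖D (s, t) (1, 0) + Complex.I * D (s, t) (0, 1)‖ ^ 2)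
      = (∫ t in (0:ℝ)..1, ‖D (s, t) (1, 0)‖ ^ 2) + (∫ t in (0:ℝ)..1, ‖D (s, t) (0, 1)‖ ^ 2)
        + ∫ t in (0:ℝ)..1, W (s, t) := by
    intro s
    have hA : IntervalIntegrable (fun t => ‖D (s, t) (1, 0)‖ ^ 2) volume 0 1 :=
      ((hcP.comp (hk s)).norm.pow 2).intervalIntegrable _ _
    have hB : IntervalIntegrable (fun t => ‖D (s, t) (0, 1)‖ ^ 2) volume 0 1 :=
      ((hcQ.comp (hk s)).norm.pow 2).intervalIntegrable _ _
    have hC : IntervalIntegrable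
        (fun t => 2 * inne (D (s, t) (1, 0)) (Complex.I * D (s, t) (0, 1))) volume 0 1 :=
      (continuous_const.mul (hcA s)).intervalIntegrable _ _
    rw [intervalIntegral.integral_congr (fun t _ => HWZAux.norm_add_I_sq _ _),
      intervalIntegral.integral_add (hA.add hB) hC, intervalIntegral.integral_add hA hB,
      intervalIntegral.integral_const_mul, ← h2X s]
  have hGc : Continuous (fun s => ∫ t in (0:ℝ)..1,
      ‖D (s, t) (1, 0) + Complex.I * D (s, t) (0, 1)‖ ^ 2) := by
    apply intervalIntegral.continuous_parametric_intervalIntegral_of_continuous'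
    exact (hcP.add (continuous_const.mul hcQ)).norm.pow 2
  -- split the s-integral of ‖g‖²
  have hsplit : (∫ s in s₁..s₂, ∫ t in (0:ℝ)..1,
        ‖D (s, t) (1, 0) + Complex.I * D (s, t) (0, 1)‖ ^ 2)
      = (∫ s in s₁..s₂, ∫ t in (0:ℝ)..1, ‖D (s, t) (1, 0)‖ ^ 2)
        + (∫ s in s₁..s₂, ∫ t in (0:ℝ)..1, ‖D (s, t) (0, 1)‖ ^ 2)
        + ∫ s in s₁..s₂, ∫ t in (0:ℝ)..1, W (s, t) := by
    rw [intervalIntegral.integral_congr (fun s _ => hGexp s),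
      intervalIntegral.integral_add ((hSc.intervalIntegrable _ _).add
        (hTc.intervalIntegrable _ _)) (hXWc.intervalIntegrable _ _),
      intervalIntegral.integral_add (hSc.intervalIntegrable _ _) (hTc.intervalIntegrable _ _)]
  have hSnonneg : 0 ≤ ∫ s in s₁..s₂, ∫ t in (0:ℝ)..1, ‖D (s, t) (1, 0)‖ ^ 2 :=
    intervalIntegral.integral_nonneg hs' (fun s _ =>
      intervalIntegral.integral_nonneg zero_le_one (fun t _ => by positivity))
  have hmono : (∫ s in s₁..s₂, ∫ t in (0:ℝ)..1, ‖v s t‖ ^ 2)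
      ≤ ∫ s in s₁..s₂, ∫ t in (0:ℝ)..1, ‖D (s, t) (0, 1)‖ ^ 2 :=
    intervalIntegral.integral_mono_on hs' (hNc.intervalIntegrable _ _)
      (hTc.intervalIntegrable _ _) hpoin
  -- identify pds/pdt with the Fréchet derivative expressions
  have epds : pds v = fun s t => D (s, t) (1, 0) := by
    funext s t; exact (hvs s t).deriv
  have epdt : pdt v = fun s t => D (s, t) (0, 1) := by
    funext s t; exact (hvt s t).deriv
  have hl2 : ∀ h : ℝ → ℂ, (l2norm h) ^ 2 = ∫ t in (0:ℝ)..1, ‖h t‖ ^ 2 := fun h =>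
    Real.sq_sqrt (intervalIntegral.integral_nonneg zero_le_one (fun u _ => by positivity))
  have hF1 : l2inner (v s₁) (fun t => Complex.I * pdt v s₁ t)
      = ∫ t in (0:ℝ)..1, inne (v s₁ t) (Complex.I * D (s₁, t) (0, 1)) := by
    rw [epdt]; rfl
  have hF2 : l2inner (v s₂) (fun t => Complex.I * pdt v s₂ t)
      = ∫ t in (0:ℝ)..1, inne (v s₂ t) (Complex.I * D (s₂, t) (0, 1)) := by
    rw [epdt]; rfl
  rw [hF1, hF2]
  simp only [hl2, epds, epdt]
  linarith [hmono, hSnonneg, hsplit, hcross,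
    le_abs_self (∫ t in (0:ℝ)..1, inne (v s₁ t) (Complex.I * D (s₁, t) (0, 1))),
    neg_abs_le (∫ t in (0:ℝ)..1, inne (v s₂ t) (Complex.I * D (s₂, t) (0, 1)))]
end
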